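/- arXiv:2211.04671 — 6 statements merged into one kernel-verified Lean document; each statement's English description precedes it below -/
import Mathlib

section
/- For every ξ ∈ L¹(𝒫), the set 𝒫_{ξ} is a nonempty subset of 𝒫 that is compact in the topology of weak convergence of probability measures; in particular the supremum defining Ê[ξ] is attained by some P ∈ 𝒫. -/
open MeasureTheory Filter Topology Set

noncomputable section

variable {Ω : Type*} [MeasurableSpace Ω] [TopologicalSpace Ω]

/-- `ξ : Ω → ℝ` belongs to `L¹(𝒮)`: it is Borel measurable, integrable w.r.t. every `P ∈ 𝒮`,
and can be approximated uniformly over `𝒮` in `L¹`-norm by bounded continuous functions. -/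
def MemL1 (𝒮 : Set (ProbabilityMeasure Ω)) (ξ : Ω → ℝ) : Prop :=
  Measurable ξ ∧ (∀ P ∈ 𝒮, Integrable ξ (P : Measure Ω)) ∧
    ∀ δ : ℝ, 0 < δ → ∃ θ : BoundedContinuousFunction Ω ℝ,
      ∀ P ∈ 𝒮, ∫ ω, |ξ ω - θ ω| ∂(P : Measure Ω) ≤ δ

/-- The sublinear expectation `Ê[ξ] = sup_{P ∈ 𝒮} E_P[ξ]`. -/
def sublinE (𝒮 : Set (ProbabilityMeasure Ω)) (ξ : Ω → ℝ) : ℝ :=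
  ⨆ P : 𝒮, ∫ ω, ξ ω ∂((P : ProbabilityMeasure Ω) : Measure Ω)

/-- The set of maximizers `𝒫_{ξ} = {P ∈ 𝒮 : E_P[ξ] = Ê[ξ]}`. -/
def maximizers (𝒮 : Set (ProbabilityMeasure Ω)) (ξ : Ω → ℝ) : Set (ProbabilityMeasure Ω) :=
  {P ∈ 𝒮 | ∫ ω, ξ ω ∂(P : Measure Ω) = sublinE 𝒮 ξ}

/-- `Ê_{ξ}[η] = sup_{P ∈ 𝒫_{ξ}} E_P[η]`. -/
def sublinECond (𝒮 : Set (ProbabilityMeasure Ω)) (ξ η : Ω → ℝ) : ℝ :=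
  ⨆ P : maximizers 𝒮 ξ, ∫ ω, η ω ∂((P : ProbabilityMeasure Ω) : Measure Ω)

lemma continuousOn_integral_of_memL1 [OpensMeasurableSpace Ω]
    (𝒮 : Set (ProbabilityMeasure Ω)) (ξ : Ω → ℝ) (hξ : MemL1 𝒮 ξ) :
    ContinuousOn (fun P : ProbabilityMeasure Ω => ∫ ω, ξ ω ∂(P : Measure Ω)) 𝒮 := by
  obtain ⟨hmeas, hint, happ⟩ := hξ
  -- choose approximating sequence
  have hch : ∀ n : ℕ, ∃ θ : BoundedContinuousFunction Ω ℝ,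
      ∀ P ∈ 𝒮, ∫ ω, |ξ ω - θ ω| ∂(P : Measure Ω) ≤ 1 / (n + 1) := fun n =>
    happ (1 / (n + 1)) (by positivity)
  choose θ hθ using hch
  have hunif : TendstoUniformlyOn
      (fun n (P : ProbabilityMeasure Ω) => ∫ ω, (θ n) ω ∂(P : Measure Ω))
      (fun P : ProbabilityMeasure Ω => ∫ ω, ξ ω ∂(P : Measure Ω)) atTop 𝒮 := by
    rw [Metric.tendstoUniformlyOn_iff]
    intro ε hε
    obtain ⟨N, hN⟩ := exists_nat_gt (1 / ε)
    filter_upwards [eventually_ge_atTop N] with n hn P hP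
    have hθint : Integrable (fun ω => (θ n) ω) (P : Measure Ω) :=
      (θ n).integrable _
    have h1 : |∫ ω, ξ ω ∂(P : Measure Ω) - ∫ ω, (θ n) ω ∂(P : Measure Ω)|
        ≤ ∫ ω, |ξ ω - (θ n) ω| ∂(P : Measure Ω) := by
      rw [← integral_sub (hint P hP) hθint]
      simpa [Real.norm_eq_abs] using
        norm_integral_le_integral_norm (μ := (P : Measure Ω)) (fun ω => ξ ω - (θ n) ω)
    have h2 := hθ n P hP
    have h3 : (1 : ℝ) / (n + 1) < ε := by
      have hn' : 1 / ε < (n : ℝ) + 1 := by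
        calc (1 : ℝ) / ε < N := hN
        _ ≤ (n : ℝ) := by exact_mod_cast hn
        _ ≤ n + 1 := by linarith
      rw [div_lt_iff₀ (by positivity)]
      have := (div_lt_iff₀ hε).mp hn'
      nlinarith
    rw [Real.dist_eq]
    calc |∫ ω, ξ ω ∂(P : Measure Ω) - ∫ ω, (θ n) ω ∂(P : Measure Ω)|
        ≤ ∫ ω, |ξ ω - (θ n) ω| ∂(P : Measure Ω) := h1
      _ ≤ 1 / (n + 1) := h2
      _ < ε := h3
  exact hunif.continuousOn (Frequently.of_forall fun n =>
    (ProbabilityMeasure.continuous_integral_boundedContinuousFunction (θ n)).continuousOn)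

/-- `𝒫_{ξ}` is a nonempty compact (for weak convergence) subset of `𝒮`;
in particular the supremum defining `Ê[ξ]` is attained. -/
theorem stmt_2 {Ω : Type*} [MeasurableSpace Ω] [TopologicalSpace Ω] [PolishSpace Ω] [BorelSpace Ω]
    (𝒮 : Set (ProbabilityMeasure Ω)) (h𝒮ne : 𝒮.Nonempty) (h𝒮c : IsCompact 𝒮)
    (ξ : Ω → ℝ) (hξ : MemL1 𝒮 ξ) :
    (maximizers 𝒮 ξ).Nonempty ∧ maximizers 𝒮 ξ ⊆ 𝒮 ∧ IsCompact (maximizers 𝒮 ξ) ∧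
      ∃ P ∈ 𝒮, ∫ ω, ξ ω ∂(P : Measure Ω) = sublinE 𝒮 ξ := by
  set f : ProbabilityMeasure Ω → ℝ := fun P => ∫ ω, ξ ω ∂(P : Measure Ω) with hf_def
  have hf : ContinuousOn f 𝒮 := continuousOn_integral_of_memL1 𝒮 ξ hξ
  obtain ⟨P₀, hP₀S, hP₀max⟩ := h𝒮c.exists_isMaxOn h𝒮ne hf
  haveI : Nonempty 𝒮 := h𝒮ne.to_subtype
  have hsub : sublinE 𝒮 ξ = f P₀ := by
    apply le_antisymm
    · exact ciSup_le fun P => hP₀max P.2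
    · exact le_ciSup_of_le ⟨f P₀, by rintro x ⟨P, rfl⟩; exact hP₀max P.2⟩ ⟨P₀, hP₀S⟩ le_rfl
  have hP₀mem : P₀ ∈ maximizers 𝒮 ξ := ⟨hP₀S, hsub.symm⟩
  refine ⟨⟨P₀, hP₀mem⟩, fun P hP => hP.1, ?_, P₀, hP₀S, hsub.symm⟩
  -- compactness
  have hrestr : Continuous (𝒮.restrict f) := hf.restrict
  haveI : CompactSpace 𝒮 := isCompact_iff_compactSpace.mp h𝒮c
  have hA : IsCompact (𝒮.restrict f ⁻¹' {sublinE 𝒮 ξ}) :=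
    (isClosed_singleton.preimage hrestr).isCompact
  have himg : Subtype.val '' (𝒮.restrict f ⁻¹' {sublinE 𝒮 ξ}) = maximizers 𝒮 ξ := by
    ext P
    constructor
    · rintro ⟨⟨Q, hQ⟩, hQf, rfl⟩
      exact ⟨hQ, hQf⟩
    · rintro ⟨hP, hPf⟩
      exact ⟨⟨P, hP⟩, hPf, rfl⟩
  rw [← himg]
  exact hA.image continuous_subtype_val
end
end

section
/- Let ξ, η ∈ L¹(𝒫), let (ε_l)_{l≥1} be positive reals with ε_l ↓ 0, and for each l let P_l ∈ 𝒫_{ξ + ε_l η}. Then: (i) there exist a subsequence (P_{l_k}) and P ∈ 𝒫 such that P_{l_k} converges weakly to P; (ii) if P_l converges weakly to some P ∈ 𝒫, then P ∈ 𝒫_{ξ}. -/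
open MeasureTheory Filter Topology Set

noncomputable section

variable {Ω : Type*} [MeasurableSpace Ω] [TopologicalSpace Ω]

/-- Integral of `|θ|` for a bounded continuous `θ` against a probability measure is at most `‖θ‖`. -/
lemma bcf_abs_integral_le [OpensMeasurableSpace Ω] (P : ProbabilityMeasure Ω)
    (θ : BoundedContinuousFunction Ω ℝ) : ∫ ω, |θ ω| ∂(P : Measure Ω) ≤ ‖θ‖ := by
  calc ∫ ω, |θ ω| ∂(P : Measure Ω) ≤ ∫ _, ‖θ‖ ∂(P : Measure Ω) := by
        apply integral_mono (θ.integrable _).abs (integrable_const _)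
        intro ω; exact θ.norm_coe_le_norm ω
    _ = ‖θ‖ := by simp

lemma abs_integral_le' {μ : Measure Ω} (f : Ω → ℝ) :
    |∫ ω, f ω ∂μ| ≤ ∫ ω, |f ω| ∂μ := by
  simpa [Real.norm_eq_abs] using norm_integral_le_integral_norm (μ := μ) f

/-- Uniform bound on integrals of absolute values, from the L¹ approximation property. -/
lemma MemL1.bound [OpensMeasurableSpace Ω] {𝒮 : Set (ProbabilityMeasure Ω)} {ζ : Ω → ℝ}
    (h : MemL1 𝒮 ζ) :
    ∃ C : ℝ, 0 ≤ C ∧ ∀ P ∈ 𝒮, ∫ ω, |ζ ω| ∂(P : Measure Ω) ≤ C := by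
  obtain ⟨θ, hθ⟩ := h.2.2 1 one_pos
  refine ⟨1 + ‖θ‖, by positivity, fun P hP => ?_⟩
  have hint := h.2.1 P hP
  calc ∫ ω, |ζ ω| ∂(P : Measure Ω)
      ≤ ∫ ω, (|ζ ω - θ ω| + |θ ω|) ∂(P : Measure Ω) := by
        apply integral_mono hint.abs (((hint.sub (θ.integrable _)).abs).add (θ.integrable _).abs)
        intro ω
        calc |ζ ω| = |(ζ ω - θ ω) + θ ω| := by ring_nf
          _ ≤ |ζ ω - θ ω| + |θ ω| := abs_add_le _ _
    _ = ∫ ω, |ζ ω - θ ω| ∂(P : Measure Ω) + ∫ ω, |θ ω| ∂(P : Measure Ω) :=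
        integral_add (hint.sub (θ.integrable _)).abs (θ.integrable _).abs
    _ ≤ 1 + ‖θ‖ := add_le_add (hθ P hP) (bcf_abs_integral_le P θ)

/-- If `ζ ∈ L¹(𝒮)` and `P l → Q` weakly inside `𝒮`, the integrals of `ζ` converge. -/
lemma MemL1.tendsto_integral [OpensMeasurableSpace Ω] {𝒮 : Set (ProbabilityMeasure Ω)}
    {ζ : Ω → ℝ} (h : MemL1 𝒮 ζ) {P : ℕ → ProbabilityMeasure Ω} {Q : ProbabilityMeasure Ω}
    (hPmem : ∀ l, P l ∈ 𝒮) (hQ : Q ∈ 𝒮) (hlim : Tendsto P atTop (𝓝 Q)) :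
    Tendsto (fun l => ∫ ω, ζ ω ∂(P l : Measure Ω)) atTop (𝓝 (∫ ω, ζ ω ∂(Q : Measure Ω))) := by
  rw [Metric.tendsto_atTop]
  intro e he
  obtain ⟨θ, hθ⟩ := h.2.2 (e/4) (by linarith)
  have hθlim := ProbabilityMeasure.tendsto_iff_forall_integral_tendsto.mp hlim θ
  rw [Metric.tendsto_atTop] at hθlim
  obtain ⟨N, hN⟩ := hθlim (e/4) (by linarith)
  refine ⟨N, fun n hn => ?_⟩
  have key : ∀ R : ProbabilityMeasure Ω, R ∈ 𝒮 →
      |∫ ω, ζ ω ∂(R : Measure Ω) - ∫ ω, θ ω ∂(R : Measure Ω)| ≤ e/4 := by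
    intro R hR
    rw [← integral_sub (h.2.1 R hR) (θ.integrable _)]
    exact (abs_integral_le' _).trans (hθ R hR)
  have h1 := key (P n) (hPmem n)
  have h2 := key Q hQ
  have h3 : |∫ ω, θ ω ∂(P n : Measure Ω) - ∫ ω, θ ω ∂(Q : Measure Ω)| < e/4 := by
    simpa [Real.dist_eq] using hN n hn
  rw [Real.dist_eq]
  have h5 := abs_sub_le (∫ ω, ζ ω ∂(P n : Measure Ω)) (∫ ω, θ ω ∂(P n : Measure Ω))
    (∫ ω, ζ ω ∂(Q : Measure Ω))
  have h4 := abs_sub_le (∫ ω, θ ω ∂(P n : Measure Ω)) (∫ ω, θ ω ∂(Q : Measure Ω))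
    (∫ ω, ζ ω ∂(Q : Measure Ω))
  rw [abs_sub_comm] at h2
  linarith

lemma bddAbove_of_bound' {𝒮 : Set (ProbabilityMeasure Ω)} {ζ : Ω → ℝ} {C : ℝ}
    (hC : ∀ P ∈ 𝒮, ∫ ω, |ζ ω| ∂(P : Measure Ω) ≤ C) :
    BddAbove (Set.range fun P : 𝒮 => ∫ ω, ζ ω ∂((P : ProbabilityMeasure Ω) : Measure Ω)) := by
  refine ⟨C, fun x hx => ?_⟩
  obtain ⟨⟨R, hR⟩, rfl⟩ := hx
  exact le_trans (le_trans (le_abs_self _) (abs_integral_le' ζ)) (hC R hR)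

/-- for `ξ, η ∈ L¹(𝒮)`, `ε_l ↓ 0` and `P_l ∈ 𝒫_{ξ + ε_l η}`:
(i) some subsequence of `(P_l)` converges weakly to some `P ∈ 𝒮`;
(ii) any weak limit `P ∈ 𝒮` of the whole sequence belongs to `𝒫_{ξ}`. -/
theorem stmt_4 {Ω : Type*} [MeasurableSpace Ω] [TopologicalSpace Ω] [PolishSpace Ω] [BorelSpace Ω]
    (𝒮 : Set (ProbabilityMeasure Ω)) (h𝒮ne : 𝒮.Nonempty) (h𝒮c : IsCompact 𝒮)
    (ξ η : Ω → ℝ) (hξ : MemL1 𝒮 ξ) (hη : MemL1 𝒮 η)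
    (ε : ℕ → ℝ) (hεpos : ∀ l, 0 < ε l) (hεanti : Antitone ε)
    (hεlim : Tendsto ε atTop (𝓝 0))
    (P : ℕ → ProbabilityMeasure Ω)
    (hP : ∀ l, P l ∈ maximizers 𝒮 (fun ω => ξ ω + ε l * η ω)) :
    (∃ φ : ℕ → ℕ, StrictMono φ ∧ ∃ Q ∈ 𝒮, Tendsto (P ∘ φ) atTop (𝓝 Q)) ∧
      (∀ Q ∈ 𝒮, Tendsto P atTop (𝓝 Q) → Q ∈ maximizers 𝒮 ξ)  := by
  have hPmem : ∀ l, P l ∈ 𝒮 := fun l => (hP l).1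
  constructor
  · obtain ⟨Q, hQ, φ, hφ, hconv⟩ := h𝒮c.tendsto_subseq hPmem
    exact ⟨φ, hφ, Q, hQ, hconv⟩
  · intro Q hQ hlim
    haveI : Nonempty 𝒮 := h𝒮ne.to_subtype
    obtain ⟨Cη, hCη0, hCη⟩ := hη.bound
    obtain ⟨Cξ, hCξ0, hCξ⟩ := hξ.bound
    have hsplit : ∀ (l : ℕ), ∀ R : ProbabilityMeasure Ω, R ∈ 𝒮 →
        ∫ ω, (ξ ω + ε l * η ω) ∂(R : Measure Ω)
        = ∫ ω, ξ ω ∂(R : Measure Ω) + ε l * ∫ ω, η ω ∂(R : Measure Ω) := by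
      intro l R hR
      rw [integral_add (hξ.2.1 R hR) ((hη.2.1 R hR).const_mul _), integral_const_mul]
    have habsη : ∀ R : ProbabilityMeasure Ω, R ∈ 𝒮 → |∫ ω, η ω ∂(R : Measure Ω)| ≤ Cη :=
      fun R hR => (abs_integral_le' η).trans (hCη R hR)
    have hbddl : ∀ l : ℕ, BddAbove (Set.range fun R : 𝒮 =>
        ∫ ω, (ξ ω + ε l * η ω) ∂((R : ProbabilityMeasure Ω) : Measure Ω)) := by
      intro l
      refine ⟨Cξ + ε l * Cη, fun x hx => ?_⟩
      obtain ⟨⟨R, hR⟩, rfl⟩ := hx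
      show ∫ ω, (ξ ω + ε l * η ω) ∂(R : Measure Ω) ≤ Cξ + ε l * Cη
      rw [hsplit l R hR]
      have h1 : ∫ ω, ξ ω ∂(R : Measure Ω) ≤ Cξ :=
        le_trans (le_trans (le_abs_self _) (abs_integral_le' ξ)) (hCξ R hR)
      have h2 : ∫ ω, η ω ∂(R : Measure Ω) ≤ Cη := le_trans (le_abs_self _) (habsη R hR)
      nlinarith [(hεpos l).le]
    have hkey : ∀ l, sublinE 𝒮 ξ - 2 * (ε l * Cη) ≤ ∫ ω, ξ ω ∂(P l : Measure Ω) := by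
      intro l
      have hmax := (hP l).2
      simp only [Set.mem_setOf_eq] at hmax
      have hS : sublinE 𝒮 ξ ≤ ∫ ω, (ξ ω + ε l * η ω) ∂(P l : Measure Ω) + ε l * Cη := by
        apply ciSup_le
        rintro ⟨R, hR⟩
        have hle : ∫ ω, (ξ ω + ε l * η ω) ∂(R : Measure Ω)
            ≤ ∫ ω, (ξ ω + ε l * η ω) ∂(P l : Measure Ω) := by
          rw [hmax]
          exact le_ciSup (hbddl l) ⟨R, hR⟩
        have h3 := habsη R hR
        have h4 : -Cη ≤ ∫ ω, η ω ∂(R : Measure Ω) := neg_le_of_abs_le h3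
        have h5 := hsplit l R hR
        show ∫ ω, ξ ω ∂(R : Measure Ω) ≤ _
        nlinarith [(hεpos l).le]
      have h5 : ∫ ω, (ξ ω + ε l * η ω) ∂(P l : Measure Ω)
          = ∫ ω, ξ ω ∂(P l : Measure Ω) + ε l * ∫ ω, η ω ∂(P l : Measure Ω) :=
        hsplit l (P l) (hPmem l)
      have h6 : ∫ ω, η ω ∂(P l : Measure Ω) ≤ Cη :=
        le_trans (le_abs_self _) (habsη _ (hPmem l))
      nlinarith [(hεpos l).le]
    have hconv := hξ.tendsto_integral hPmem hQ hlim
    have htend : Tendsto (fun l => sublinE 𝒮 ξ - 2 * (ε l * Cη)) atTop (𝓝 (sublinE 𝒮 ξ)) := by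
      have h7 : Tendsto (fun l => 2 * (ε l * Cη)) atTop (𝓝 (2 * (0 * Cη))) :=
        ((hεlim.mul_const Cη).const_mul 2)
      simpa using tendsto_const_nhds.sub h7
    have h2 : sublinE 𝒮 ξ ≤ ∫ ω, ξ ω ∂(Q : Measure Ω) :=
      le_of_tendsto_of_tendsto' htend hconv hkey
    have h1 : ∫ ω, ξ ω ∂(Q : Measure Ω) ≤ sublinE 𝒮 ξ :=
      le_ciSup (bddAbove_of_bound' hCξ) ⟨Q, hQ⟩
    exact ⟨hQ, le_antisymm h1 h2⟩
end
end

section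
/- For all ξ, η ∈ L¹(𝒫), one has Γ(𝒫_{ξ+εη}, 𝒫_{ξ}) → 0 as ε ↓ 0. -/
open MeasureTheory Filter Topology Set

noncomputable section

variable {Ω : Type*} [MeasurableSpace Ω] [TopologicalSpace Ω]

/-- `Γ(A, B) = sup_{P ∈ A} inf_{Q ∈ B} d_LP(P, Q)`. -/
def GammaDist {Ω' : Type*} [MeasurableSpace Ω'] [PseudoEMetricSpace Ω']
    (A B : Set (ProbabilityMeasure Ω')) : ℝ :=
  ⨆ P : A, ⨅ Q : B,
    levyProkhorovDist ((P : ProbabilityMeasure Ω') : Measure Ω')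
      ((Q : ProbabilityMeasure Ω') : Measure Ω')

section Aux

variable {Ω' : Type*} [MeasurableSpace Ω'] [MetricSpace Ω']
    [TopologicalSpace.SeparableSpace Ω'] [BorelSpace Ω']

lemma lp_nonneg (P Q : ProbabilityMeasure Ω') :
    0 ≤ levyProkhorovDist (P : Measure Ω') (Q : Measure Ω') := ENNReal.toReal_nonneg

/-- Continuity of `P ↦ ∫ ξ dP` on `𝒮` for `ξ ∈ L¹(𝒮)`. -/
lemma integral_continuousOn {𝒮 : Set (ProbabilityMeasure Ω')} {ξ : Ω' → ℝ} (hξ : MemL1 𝒮 ξ) :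
    ContinuousOn (fun P : ProbabilityMeasure Ω' => ∫ ω, ξ ω ∂(P : Measure Ω')) 𝒮 := by
  have hpos : ∀ n : ℕ, (0:ℝ) < 1/(n+1) := fun n => by positivity
  set θ : ℕ → BoundedContinuousFunction Ω' ℝ := fun n => (hξ.2.2 (1/(n+1)) (hpos n)).choose
    with hθdef
  have hθ : ∀ n, ∀ P ∈ 𝒮, ∫ ω, |ξ ω - θ n ω| ∂(P : Measure Ω') ≤ 1/(n+1) :=
    fun n => (hξ.2.2 (1/(n+1)) (hpos n)).choose_spec
  have htu : TendstoUniformlyOn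
      (fun n (P : ProbabilityMeasure Ω') => ∫ ω, θ n ω ∂(P : Measure Ω'))
      (fun P : ProbabilityMeasure Ω' => ∫ ω, ξ ω ∂(P : Measure Ω')) atTop 𝒮 := by
    rw [Metric.tendstoUniformlyOn_iff]
    intro ε hε
    filter_upwards [tendsto_one_div_add_atTop_nhds_zero_nat.eventually_lt_const hε] with n hn P hP
    rw [Real.dist_eq]
    have hint1 : Integrable ξ (P : Measure Ω') := hξ.2.1 P hP
    have hint2 : Integrable (fun ω => θ n ω) (P : Measure Ω') := (θ n).integrable _
    calc |(∫ ω, ξ ω ∂(P : Measure Ω')) - ∫ ω, θ n ω ∂(P : Measure Ω')|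
        = |∫ ω, (ξ ω - θ n ω) ∂(P : Measure Ω')| := by rw [integral_sub hint1 hint2]
      _ ≤ ∫ ω, |ξ ω - θ n ω| ∂(P : Measure Ω') := by
          simpa [Real.norm_eq_abs] using
            norm_integral_le_integral_norm (μ := (P : Measure Ω')) (fun ω => ξ ω - θ n ω)
      _ ≤ 1/(n+1) := hθ n P hP
      _ < ε := hn
  exact htu.continuousOn <| Frequently.of_forall fun n =>
    (MeasureTheory.ProbabilityMeasure.continuous_integral_boundedContinuousFunction
      (θ n)).continuousOn

/-- On a nonempty compact `𝒮`, the sublinear expectation is attained and dominates. -/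
lemma exists_max {𝒮 : Set (ProbabilityMeasure Ω')} (h𝒮ne : 𝒮.Nonempty) (h𝒮c : IsCompact 𝒮)
    {f : Ω' → ℝ}
    (hc : ContinuousOn (fun P : ProbabilityMeasure Ω' => ∫ ω, f ω ∂(P : Measure Ω')) 𝒮) :
    (maximizers 𝒮 f).Nonempty ∧
      ∀ Q ∈ 𝒮, ∫ ω, f ω ∂(Q : Measure Ω') ≤ sublinE 𝒮 f := by
  obtain ⟨P₀, hP₀, hmax'⟩ := h𝒮c.exists_isMaxOn h𝒮ne hc
  have hmax : ∀ Q ∈ 𝒮, ∫ ω, f ω ∂(Q : Measure Ω') ≤ ∫ ω, f ω ∂(P₀ : Measure Ω') :=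
    fun Q hQ => hmax' hQ
  have hbdd : BddAbove (range fun P : 𝒮 =>
      ∫ ω, f ω ∂((P : ProbabilityMeasure Ω') : Measure Ω')) := by
    refine ⟨∫ ω, f ω ∂(P₀ : Measure Ω'), ?_⟩
    rintro x ⟨⟨Q, hQ⟩, rfl⟩
    exact hmax Q hQ
  have hle : ∀ Q ∈ 𝒮, ∫ ω, f ω ∂(Q : Measure Ω') ≤ sublinE 𝒮 f := fun Q hQ =>
    le_ciSup hbdd (⟨Q, hQ⟩ : 𝒮)
  have hne : Nonempty 𝒮 := h𝒮ne.to_subtype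
  have heq : sublinE 𝒮 f = ∫ ω, f ω ∂(P₀ : Measure Ω') :=
    le_antisymm (ciSup_le fun Q => hmax Q Q.2) (hle P₀ hP₀)
  exact ⟨⟨P₀, hP₀, heq.symm⟩, hle⟩

end Aux

/-- `Γ(𝒫_{ξ+εη}, 𝒫_{ξ}) → 0` as `ε ↓ 0`. -/
theorem stmt_5 {Ω : Type*} [MeasurableSpace Ω] [MetricSpace Ω]
    [TopologicalSpace.SeparableSpace Ω] [CompleteSpace Ω] [BorelSpace Ω]
    (𝒮 : Set (ProbabilityMeasure Ω)) (h𝒮ne : 𝒮.Nonempty) (h𝒮c : IsCompact 𝒮)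
    (ξ η : Ω → ℝ) (hξ : MemL1 𝒮 ξ) (hη : MemL1 𝒮 η) :
    Tendsto
      (fun ε : ℝ => GammaDist (maximizers 𝒮 (fun ω => ξ ω + ε * η ω)) (maximizers 𝒮 ξ))
      (𝓝[>] 0) (𝓝 0) := by
  have hcξ := integral_continuousOn hξ
  have hcη := integral_continuousOn hη
  obtain ⟨C, hC⟩ := h𝒮c.exists_bound_of_continuousOn hcη
  obtain ⟨⟨Qs, hQs⟩, hleξ⟩ := exists_max h𝒮ne h𝒮c hcξ
  have hdecomp : ∀ (ε : ℝ), ∀ P ∈ 𝒮, ∫ ω, (ξ ω + ε * η ω) ∂(P : Measure Ω)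
      = (∫ ω, ξ ω ∂(P : Measure Ω)) + ε * ∫ ω, η ω ∂(P : Measure Ω) := by
    intro ε P hP
    rw [integral_add (hξ.2.1 P hP) ((hη.2.1 P hP).const_mul ε), integral_const_mul]
  have hcε : ∀ ε : ℝ, ContinuousOn
      (fun P : ProbabilityMeasure Ω => ∫ ω, (ξ ω + ε * η ω) ∂(P : Measure Ω)) 𝒮 := by
    intro ε
    refine ContinuousOn.congr (f := fun P : ProbabilityMeasure Ω =>
      (∫ ω, ξ ω ∂(P : Measure Ω)) + ε * ∫ ω, η ω ∂(P : Measure Ω)) ?_ ?_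
    · exact hcξ.add (continuousOn_const.mul hcη)
    · intro P hP; exact hdecomp ε P hP
  -- Key claim: eventually every maximizer of `ξ + ε η` is within `c` of a maximizer of `ξ`.
  have key : ∀ c : ℝ, 0 < c → ∀ᶠ ε in 𝓝[>] (0:ℝ),
      ∀ P ∈ maximizers 𝒮 (fun ω => ξ ω + ε * η ω), ∃ Q ∈ maximizers 𝒮 ξ,
        levyProkhorovDist (P : Measure Ω) (Q : Measure Ω) ≤ c := by
    intro c hc
    by_contra hcon
    rw [Filter.not_eventually] at hcon
    have H : ∀ n : ℕ, ∃ ε : ℝ, ε ∈ Ioo (0:ℝ) (1/(n+1)) ∧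
        ∃ P ∈ maximizers 𝒮 (fun ω => ξ ω + ε * η ω),
          ∀ Q ∈ maximizers 𝒮 ξ, c < levyProkhorovDist (P : Measure Ω) (Q : Measure Ω) := by
      intro n
      obtain ⟨ε, hεmem, hεbad⟩ :=
        ((nhdsGT_basis (0:ℝ)).frequently_iff.mp hcon) (1/(n+1)) (by positivity)
      push_neg at hεbad
      exact ⟨ε, hεmem, hεbad⟩
    choose εs hεs Ps hPs hPbad using H
    have hPs𝒮 : ∀ n, Ps n ∈ 𝒮 := fun n => (hPs n).1
    -- quantitative estimate on `∫ ξ dPₙ`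
    have hest : ∀ n, sublinE 𝒮 ξ - εs n * (2*C) ≤ ∫ ω, ξ ω ∂(Ps n : Measure Ω) := by
      intro n
      have hQmem : Qs ∈ 𝒮 := hQs.1
      have h1 : ∫ ω, (ξ ω + εs n * η ω) ∂(Qs : Measure Ω)
          ≤ ∫ ω, (ξ ω + εs n * η ω) ∂(Ps n : Measure Ω) := by
        have h2 := (exists_max h𝒮ne h𝒮c (hcε (εs n))).2 Qs hQmem
        have h3 := (hPs n).2
        calc ∫ ω, (ξ ω + εs n * η ω) ∂(Qs : Measure Ω)
            ≤ sublinE 𝒮 (fun ω => ξ ω + εs n * η ω) := h2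
          _ = ∫ ω, (ξ ω + εs n * η ω) ∂(Ps n : Measure Ω) := h3.symm
      rw [hdecomp _ _ hQmem, hdecomp _ _ (hPs𝒮 n), hQs.2] at h1
      have hb1 : |∫ ω, η ω ∂(Qs : Measure Ω)| ≤ C := by
        simpa [Real.norm_eq_abs] using hC Qs hQmem
      have hb2 : |∫ ω, η ω ∂(Ps n : Measure Ω)| ≤ C := by
        simpa [Real.norm_eq_abs] using hC (Ps n) (hPs𝒮 n)
      rw [abs_le] at hb1 hb2
      have hεpos : 0 < εs n := (hεs n).1
      nlinarith [hb1.1, hb1.2, hb2.1, hb2.2]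
    -- extract a convergent subsequence
    obtain ⟨P, hPmem, φ, hφ, hconv⟩ := h𝒮c.isSeqCompact hPs𝒮
    have hεto : Tendsto εs atTop (𝓝 0) :=
      tendsto_of_tendsto_of_tendsto_of_le_of_le tendsto_const_nhds
        tendsto_one_div_add_atTop_nhds_zero_nat (fun n => (hεs n).1.le)
        (fun n => (hεs n).2.le)
    have hεφ : Tendsto (fun n => εs (φ n)) atTop (𝓝 0) := hεto.comp hφ.tendsto_atTop
    have hFconv : Tendsto (fun n => ∫ ω, ξ ω ∂(Ps (φ n) : Measure Ω)) atTop
        (𝓝 (∫ ω, ξ ω ∂(P : Measure Ω))) := by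
      have h1 : Tendsto (fun n => Ps (φ n)) atTop (𝓝[𝒮] P) := by
        rw [tendsto_nhdsWithin_iff]
        exact ⟨hconv, Eventually.of_forall fun n => hPs𝒮 (φ n)⟩
      exact (hcξ P hPmem).tendsto.comp h1
    have hge : sublinE 𝒮 ξ ≤ ∫ ω, ξ ω ∂(P : Measure Ω) := by
      have h2 : Tendsto (fun n => sublinE 𝒮 ξ - εs (φ n) * (2*C)) atTop
          (𝓝 (sublinE 𝒮 ξ)) := by
        simpa using tendsto_const_nhds.sub (hεφ.mul_const (2*C))
      exact le_of_tendsto_of_tendsto' h2 hFconv (fun n => hest (φ n))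
    have hPmax : P ∈ maximizers 𝒮 ξ := ⟨hPmem, le_antisymm (hleξ P hPmem) hge⟩
    have hdist : Tendsto
        (fun n => levyProkhorovDist ((Ps (φ n)) : Measure Ω) (P : Measure Ω)) atTop (𝓝 0) := by
      have h3 : Tendsto (fun n => LevyProkhorov.probabilityMeasureHomeomorph (Ps (φ n)))
          atTop (𝓝 (LevyProkhorov.probabilityMeasureHomeomorph P)) :=
        (LevyProkhorov.probabilityMeasureHomeomorph.continuous.tendsto P).comp hconv
      exact tendsto_iff_dist_tendsto_zero.mp h3
    obtain ⟨n, hn⟩ := (hdist.eventually_lt_const hc).exists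
    exact absurd (hPbad (φ n) P hPmax) (not_lt.mpr hn.le)
  -- conclude
  rw [Metric.tendsto_nhds]
  intro c hc
  filter_upwards [key (c/2) (by linarith)] with ε hε
  have hΓnn : 0 ≤ GammaDist (maximizers 𝒮 (fun ω => ξ ω + ε * η ω)) (maximizers 𝒮 ξ) :=
    Real.iSup_nonneg fun P => Real.iInf_nonneg fun Q => lp_nonneg _ _
  have hΓle : GammaDist (maximizers 𝒮 (fun ω => ξ ω + ε * η ω)) (maximizers 𝒮 ξ) ≤ c/2 := by
    refine Real.iSup_le ?_ (by linarith)
    rintro ⟨Pm, hPm⟩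
    obtain ⟨Q, hQ, hdq⟩ := hε Pm hPm
    refine ciInf_le_of_le ⟨0, ?_⟩ (⟨Q, hQ⟩ : maximizers 𝒮 ξ) hdq
    rintro x ⟨Q', rfl⟩
    exact lp_nonneg _ _
  rw [Real.dist_eq, sub_zero, abs_of_nonneg hΓnn]
  linarith
end
end

section
/- Let ξ, η ∈ L¹(𝒫) and F(λ) := Ê[ξ + λη]. Then the left derivative of F at λ = 0 exists and equals −Ê_{ξ}[−η]; consequently, F is differentiable at λ = 0 if and only if Ê_{ξ}[η] = −Ê_{ξ}[−η]. -/
open MeasureTheory Filter Topology Set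

noncomputable section

variable {Ω : Type*} [MeasurableSpace Ω] [TopologicalSpace Ω]

/-- Abstract left-derivative lemma for `F lam = ⨆_{P ∈ K} (g P + lam * h P)`. -/
lemma abstract_left {X : Type*} [TopologicalSpace X] {K : Set X} (hK : IsCompact K)
    (hne : K.Nonempty) {g h : X → ℝ} (hg : ContinuousOn g K) (hh : ContinuousOn h K) :
    Tendsto (fun lam : ℝ => ((⨆ P : K, (g ↑P + lam * h ↑P)) - ⨆ P : K, g ↑P) / lam) (𝓝[<] 0)
      (𝓝 (-(⨆ P : {P ∈ K | g P = ⨆ Q : K, g ↑Q}, -h ↑P))) := by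
  haveI hKne : Nonempty K := hne.to_subtype
  obtain ⟨C, hC⟩ := hK.exists_bound_of_continuousOn hh
  have hC0 : 0 ≤ C := le_trans (norm_nonneg _) (hC _ hne.choose_spec)
  set G : ℝ → X → ℝ := fun lam P => g P + lam * h P with hG
  have hGc : ∀ lam : ℝ, ContinuousOn (G lam) K := fun lam => hg.add (continuousOn_const.mul hh)
  set F : ℝ → ℝ := fun lam => ⨆ P : K, G lam ↑P with hF
  have hbdd : ∀ lam : ℝ, BddAbove (Set.range fun P : K => G lam ↑P) := by
    intro lam
    have := hK.bddAbove_image (hGc lam)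
    rwa [Set.image_eq_range] at this
  have hle : ∀ (lam : ℝ), ∀ P ∈ K, G lam P ≤ F lam := fun lam P hP => le_ciSup (hbdd lam) ⟨P, hP⟩
  have hmax : ∀ lam : ℝ, ∃ P ∈ K, F lam = G lam P := by
    intro lam
    obtain ⟨P, hP, hPmax⟩ := hK.exists_isMaxOn hne (hGc lam)
    exact ⟨P, hP, le_antisymm (ciSup_le fun Q => hPmax Q.2) (hle lam P hP)⟩
  have hF0 : F 0 = ⨆ P : K, g ↑P := iSup_congr fun P => by simp [hG]
  set M : Set X := {P ∈ K | g P = ⨆ Q : K, g ↑Q} with hM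
  have hMK : M ⊆ K := fun P hP => hP.1
  obtain ⟨P₀, hP₀K, hP₀⟩ := hmax 0
  have hP₀M : P₀ ∈ M := ⟨hP₀K, by rw [← hF0, hP₀]; simp [hG]⟩
  haveI : Nonempty M := Set.Nonempty.to_subtype ⟨P₀, hP₀M⟩
  have hbddM : BddAbove (Set.range fun P : M => -h ↑P) := by
    refine ⟨C, ?_⟩
    rintro x ⟨P, rfl⟩
    dsimp only
    have := hC _ (hMK P.2)
    rw [Real.norm_eq_abs, abs_le] at this
    linarith [this.1]
  set t : ℝ := -(⨆ P : M, -h ↑P) with ht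
  have htle : ∀ P ∈ M, t ≤ h P := by
    intro P hP
    have : -h P ≤ ⨆ P : M, -h ↑P := le_ciSup hbddM ⟨P, hP⟩
    rw [ht]; linarith
  have hget : ∀ b : ℝ, (∀ P ∈ M, b ≤ h P) → b ≤ t := by
    intro b hb
    have : (⨆ P : M, -h ↑P) ≤ -b := ciSup_le fun P => by have := hb P P.2; linarith
    rw [ht]; linarith
  set D : ℝ → ℝ := fun lam => (F lam - F 0) / lam with hD
  -- monotonicity of difference quotients on `Iio 0`
  have hmono : MonotoneOn D (Iio 0) := by
    intro a ha b hb hab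
    rcases eq_or_lt_of_le hab with rfl | hab'
    · exact le_refl _
    have ha0 : a < 0 := ha
    have hb0 : b < 0 := hb
    have hba : 0 < b / a := div_pos_of_neg_of_neg hb0 ha0
    have hba1 : b / a ≤ 1 := by
      rw [div_le_iff_of_neg ha0, one_mul]
      exact hab
    have hFb : F b - F 0 ≤ (b / a) * (F a - F 0) := by
      have h1 : ∀ P ∈ K, G b P ≤ (b / a) * F a + (1 - b / a) * F 0 := by
        intro P hP
        have hane : a ≠ 0 := ne_of_lt ha0
        have e : G b P = (b / a) * G a P + (1 - b / a) * G 0 P := by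
          simp only [hG]; field_simp; ring
        rw [e]
        have t1 := hle a P hP
        have t2 := hle 0 P hP
        nlinarith [mul_le_mul_of_nonneg_left t1 hba.le,
          mul_le_mul_of_nonneg_left t2 (by linarith : (0:ℝ) ≤ 1 - b / a)]
      have h2 : F b ≤ (b / a) * F a + (1 - b / a) * F 0 := ciSup_le fun P => h1 P P.2
      nlinarith
    rw [hD]
    dsimp only
    rw [le_div_iff_of_neg hb0]
    have hx : b / a * (F a - F 0) = (F a - F 0) / a * b := by ring
    linarith
  -- upper bound `D lam ≤ t` for `lam < 0`
  have hub : ∀ lam < (0:ℝ), D lam ≤ t := by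
    intro lam hlam
    refine hget _ ?_
    intro P hP
    have hgP : g P = F 0 := by rw [hF0]; exact hP.2
    have h2 : F 0 + lam * h P ≤ F lam := by
      have := hle lam P hP.1
      simp only [hG] at this
      linarith
    rw [hD]
    dsimp only
    rw [div_le_iff_of_neg hlam]
    nlinarith
  have hIione : (D '' Iio 0).Nonempty := ⟨D (-1), ⟨-1, by norm_num, rfl⟩⟩
  have hDbdd : BddAbove (D '' Iio 0) := ⟨t, by rintro x ⟨lam, hlam, rfl⟩; exact hub lam hlam⟩
  set S0 : ℝ := sSup (D '' Iio 0) with hS0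
  have htend : Tendsto D (𝓝[<] (0:ℝ)) (𝓝 S0) := hmono.tendsto_nhdsLT hDbdd
  have hS0le : S0 ≤ t := csSup_le hIione (by rintro x ⟨lam, hlam, rfl⟩; exact hub lam hlam)
  have hDleS0 : ∀ lam < (0:ℝ), D lam ≤ S0 := fun lam hlam => le_csSup hDbdd ⟨lam, hlam, rfl⟩
  -- maximizers for each lam
  choose Pc hPcK hPc using hmax
  set l : Filter ℝ := 𝓝[<] (0:ℝ) with hl
  have hle𝒫 : map Pc l ≤ 𝓟 K := le_principal_iff.2 (mem_map.2 (univ_mem' fun lam => hPcK lam))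
  obtain ⟨Pstar, hPstarK, hclust⟩ := hK.exists_clusterPt hle𝒫
  set L : Filter X := 𝓝 Pstar ⊓ map Pc l with hLdef
  haveI : L.NeBot := hclust
  have hLmap : L ≤ map Pc l := inf_le_right
  have hLK : L ≤ 𝓝[K] Pstar := le_inf inf_le_left (le_trans hLmap hle𝒫)
  have hgPL : Tendsto g L (𝓝 (g Pstar)) := (hg Pstar hPstarK).mono_left hLK
  have hhPL : Tendsto h L (𝓝 (h Pstar)) := (hh Pstar hPstarK).mono_left hLK
  -- |F lam - F 0| ≤ |lam| * C
  have hFbound : ∀ lam : ℝ, |F lam - F 0| ≤ |lam| * C := by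
    intro lam
    have h1 : F lam ≤ F 0 + |lam| * C := by
      refine ciSup_le fun P => ?_
      have t2 := hle 0 P P.2
      have habs : lam * h ↑P ≤ |lam| * C := by
        calc lam * h ↑P ≤ |lam * h ↑P| := le_abs_self _
        _ = |lam| * |h ↑P| := abs_mul _ _
        _ ≤ |lam| * C := by
            have := hC _ P.2; rw [Real.norm_eq_abs] at this
            exact mul_le_mul_of_nonneg_left this (abs_nonneg _)
      simp only [hG] at t2 ⊢
      nlinarith
    have h2 : F 0 ≤ F lam + |lam| * C := by
      rw [hF0]
      refine ciSup_le fun P => ?_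
      have t2 := hle lam P P.2
      have habs : -(lam * h ↑P) ≤ |lam| * C := by
        calc -(lam * h ↑P) ≤ |lam * h ↑P| := neg_le_abs _
        _ = |lam| * |h ↑P| := abs_mul _ _
        _ ≤ |lam| * C := by
            have := hC _ P.2; rw [Real.norm_eq_abs] at this
            exact mul_le_mul_of_nonneg_left this (abs_nonneg _)
      simp only [hG] at t2
      nlinarith
    rw [abs_le]; constructor <;> linarith
  -- g ∘ Pc → F 0 along l
  have hgPc : Tendsto (fun lam => g (Pc lam)) l (𝓝 (F 0)) := by
    have hbound : ∀ lam : ℝ, ‖g (Pc lam) - F 0‖ ≤ 2 * C * |lam| := by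
      intro lam
      have e : g (Pc lam) - F 0 = (F lam - F 0) - lam * h (Pc lam) := by
        have := hPc lam; simp only [hG] at this; linarith
      rw [Real.norm_eq_abs, e]
      calc |(F lam - F 0) - lam * h (Pc lam)| ≤ |F lam - F 0| + |lam * h (Pc lam)| :=
            abs_sub _ _
      _ ≤ |lam| * C + |lam| * C := by
          refine add_le_add (hFbound lam) ?_
          rw [abs_mul]
          have := hC _ (hPcK lam); rw [Real.norm_eq_abs] at this
          exact mul_le_mul_of_nonneg_left this (abs_nonneg _)
      _ = 2 * C * |lam| := by ring
    have h0 : Tendsto (fun lam : ℝ => 2 * C * |lam|) l (𝓝 0) := by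
      have : Tendsto (fun lam : ℝ => 2 * C * |lam|) (𝓝 0) (𝓝 (2 * C * |(0:ℝ)|)) := by
        exact (continuous_const.mul continuous_abs).tendsto 0
      simp only [abs_zero, mul_zero] at this
      exact this.mono_left nhdsWithin_le_nhds
    have := squeeze_zero_norm hbound h0
    have h3 := this.add_const (F 0)
    simpa using h3
  have hgmap : Tendsto g L (𝓝 (F 0)) :=
    ((tendsto_map'_iff.2 hgPc : Tendsto g (map Pc l) (𝓝 (F 0)))).mono_left hLmap
  have hgPstar : g Pstar = F 0 := tendsto_nhds_unique hgPL hgmap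
  have hPstarM : Pstar ∈ M := ⟨hPstarK, by rw [hgPstar, hF0]⟩
  -- h Pstar ≤ S0
  have hhub : h Pstar ≤ S0 := by
    refine le_of_tendsto hhPL ?_
    have hev : ∀ᶠ Q in map Pc l, h Q ≤ S0 := by
      rw [eventually_map]
      filter_upwards [self_mem_nhdsWithin] with lam hlam
      have hlam0 : lam < 0 := hlam
      have hgle : g (Pc lam) ≤ F 0 := by
        have := hle 0 _ (hPcK lam); simp only [hG] at this; linarith
      have hD1 : h (Pc lam) ≤ D lam := by
        rw [hD]; dsimp only
        rw [le_div_iff_of_neg hlam0]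
        have := hPc lam; simp only [hG] at this
        nlinarith
      exact le_trans hD1 (hDleS0 lam hlam0)
    exact hev.filter_mono hLmap
  have hS0t : S0 = t := le_antisymm hS0le (le_trans (htle Pstar hPstarM) hhub)
  have hfinal : Tendsto D l (𝓝 t) := hS0t ▸ htend
  have goalEq : (fun lam : ℝ => ((⨆ P : K, (g ↑P + lam * h ↑P)) - ⨆ P : K, g ↑P) / lam) = D := by
    funext lam
    show _ = (F lam - F 0) / lam
    rw [← hF0]
  rw [goalEq]
  exact hfinal

/-- Abstract right-derivative lemma. -/
lemma abstract_right {X : Type*} [TopologicalSpace X] {K : Set X} (hK : IsCompact K)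
    (hne : K.Nonempty) {g h : X → ℝ} (hg : ContinuousOn g K) (hh : ContinuousOn h K) :
    Tendsto (fun lam : ℝ => ((⨆ P : K, (g ↑P + lam * h ↑P)) - ⨆ P : K, g ↑P) / lam) (𝓝[>] 0)
      (𝓝 (⨆ P : {P ∈ K | g P = ⨆ Q : K, g ↑Q}, h ↑P)) := by
  have hnegt : Tendsto (fun lam : ℝ => -lam) (𝓝[>] (0:ℝ)) (𝓝[<] (0:ℝ)) := by
    apply tendsto_nhdsWithin_of_tendsto_nhds_of_eventually_within
    · have := (continuous_neg (G := ℝ)).tendsto 0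
      simp only [neg_zero] at this
      exact this.mono_left nhdsWithin_le_nhds
    · filter_upwards [self_mem_nhdsWithin] with x hx
      simpa using (hx : (0:ℝ) < x)
  have hh' : ContinuousOn (fun x => -h x) K := hh.neg
  have H := abstract_left (h := fun x => -h x) hK hne hg hh'
  beta_reduce at H
  have H2 := H.comp hnegt
  have efun : ((fun mu : ℝ => ((⨆ P : K, (g ↑P + mu * -h ↑P)) - ⨆ P : K, g ↑P) / mu) ∘
      (fun lam : ℝ => -lam)) =
      fun lam : ℝ => -(((⨆ P : K, (g ↑P + lam * h ↑P)) - ⨆ P : K, g ↑P) / lam) := by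
    funext lam
    simp only [Function.comp_apply]
    rw [show (⨆ P : K, (g ↑P + -lam * -h ↑P)) = ⨆ P : K, (g ↑P + lam * h ↑P) from
      iSup_congr fun P => by ring]
    ring
  have etarget : -(⨆ P : {P ∈ K | g P = ⨆ Q : K, g ↑Q}, -(-h ↑P)) =
      -(⨆ P : {P ∈ K | g P = ⨆ Q : K, g ↑Q}, h ↑P) := by
    congr 1
    exact iSup_congr fun P => neg_neg _
  rw [efun, etarget] at H2
  have H3 := H2.neg
  simp only [neg_neg] at H3
  exact H3

/-- Uniform (over `𝒮`) L¹-approximation by bounded continuous functions gives continuity of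
`P ↦ ∫ ξ dP` on `𝒮`. -/
lemma memL1_continuousOn' [OpensMeasurableSpace Ω] {𝒮 : Set (ProbabilityMeasure Ω)} {ξ : Ω → ℝ}
    (hint : ∀ P ∈ 𝒮, Integrable ξ (P : Measure Ω))
    (happ : ∀ δ : ℝ, 0 < δ → ∃ θ : BoundedContinuousFunction Ω ℝ,
      ∀ P ∈ 𝒮, ∫ ω, |ξ ω - θ ω| ∂(P : Measure Ω) ≤ δ) :
    ContinuousOn (fun P : ProbabilityMeasure Ω => ∫ ω, ξ ω ∂(P : Measure Ω)) 𝒮 := by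
  choose θs hθs using fun n : ℕ => happ (1 / (n + 1)) (by positivity)
  refine TendstoUniformlyOn.continuousOn (p := atTop)
    (F := fun n (P : ProbabilityMeasure Ω) => ∫ ω, θs n ω ∂(P : Measure Ω)) ?_ ?_
  · rw [Metric.tendstoUniformlyOn_iff]
    intro ε hε
    obtain ⟨N, hN⟩ := exists_nat_one_div_lt hε
    filter_upwards [eventually_ge_atTop N] with n hn P hP
    have hint' := hint P hP
    have hintθ : Integrable (θs n) (P : Measure Ω) := (θs n).integrable _
    rw [Real.dist_eq, ← integral_sub hint' hintθ]
    calc |∫ ω, (ξ ω - θs n ω) ∂(P : Measure Ω)| ≤ ∫ ω, |ξ ω - θs n ω| ∂(P : Measure Ω) := by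
          simpa [Real.norm_eq_abs] using
            norm_integral_le_integral_norm (μ := (P : Measure Ω)) (fun ω => ξ ω - θs n ω)
    _ ≤ 1 / (n + 1) := hθs n P hP
    _ ≤ 1 / (N + 1) := by
        apply one_div_le_one_div_of_le (by positivity)
        exact_mod_cast by exact_mod_cast Nat.add_le_add_right hn 1
    _ < ε := hN
  · exact Filter.Eventually.frequently <| Filter.Eventually.of_forall fun n =>
      (ProbabilityMeasure.continuous_integral_boundedContinuousFunction (θs n)).continuousOn

/-- the left derivative of `F(λ) = Ê[ξ + λη]` at `0` exists and equals
`−Ê_{ξ}[−η]`; `F` is differentiable at `0` iff `Ê_{ξ}[η] = −Ê_{ξ}[−η]`. -/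
theorem stmt_8 {Ω : Type*} [MeasurableSpace Ω] [TopologicalSpace Ω] [PolishSpace Ω] [BorelSpace Ω]
    (𝒮 : Set (ProbabilityMeasure Ω)) (h𝒮ne : 𝒮.Nonempty) (h𝒮c : IsCompact 𝒮)
    (ξ η : Ω → ℝ) (hξ : MemL1 𝒮 ξ) (hη : MemL1 𝒮 η) :
    Tendsto
      (fun lam : ℝ => (sublinE 𝒮 (fun ω => ξ ω + lam * η ω) - sublinE 𝒮 ξ) / lam)
      (𝓝[<] 0) (𝓝 (-(sublinECond 𝒮 ξ (fun ω => - η ω)))) ∧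
    (DifferentiableAt ℝ (fun lam : ℝ => sublinE 𝒮 (fun ω => ξ ω + lam * η ω)) 0 ↔
      sublinECond 𝒮 ξ η = -(sublinECond 𝒮 ξ (fun ω => - η ω))) := by
  obtain ⟨hξm, hξint, hξapp⟩ := hξ
  obtain ⟨hηm, hηint, hηapp⟩ := hη
  have hg : ContinuousOn (fun P : ProbabilityMeasure Ω => ∫ ω, ξ ω ∂(P : Measure Ω)) 𝒮 :=
    memL1_continuousOn' hξint hξapp
  have hh : ContinuousOn (fun P : ProbabilityMeasure Ω => ∫ ω, η ω ∂(P : Measure Ω)) 𝒮 :=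
    memL1_continuousOn' hηint hηapp
  have hleft := abstract_left h𝒮c h𝒮ne hg hh
  have hright := abstract_right h𝒮c h𝒮ne hg hh
  beta_reduce at hleft hright
  -- transfer equalities
  have e1lam : ∀ lam : ℝ, sublinE 𝒮 (fun ω => ξ ω + lam * η ω)
      = ⨆ P : 𝒮, ((∫ ω, ξ ω ∂((P : ProbabilityMeasure Ω) : Measure Ω))
          + lam * ∫ ω, η ω ∂((P : ProbabilityMeasure Ω) : Measure Ω)) := by
    intro lam
    refine iSup_congr fun P => ?_
    rw [integral_add (hξint P P.2) ((hηint P P.2).const_mul lam), integral_const_mul lam η]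
  have e1 : (fun lam : ℝ => (sublinE 𝒮 (fun ω => ξ ω + lam * η ω) - sublinE 𝒮 ξ) / lam)
      = fun lam : ℝ => ((⨆ P : 𝒮, ((∫ ω, ξ ω ∂((P : ProbabilityMeasure Ω) : Measure Ω))
          + lam * ∫ ω, η ω ∂((P : ProbabilityMeasure Ω) : Measure Ω)))
          - ⨆ P : 𝒮, ∫ ω, ξ ω ∂((P : ProbabilityMeasure Ω) : Measure Ω)) / lam := by
    funext lam
    rw [e1lam lam]
    rfl
  have e4 : sublinECond 𝒮 ξ (fun ω => - η ω)
      = ⨆ P : maximizers 𝒮 ξ, -∫ ω, η ω ∂((P : ProbabilityMeasure Ω) : Measure Ω) :=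
    iSup_congr fun P => integral_neg η
  have part1 : Tendsto
      (fun lam : ℝ => (sublinE 𝒮 (fun ω => ξ ω + lam * η ω) - sublinE 𝒮 ξ) / lam)
      (𝓝[<] 0) (𝓝 (-(sublinECond 𝒮 ξ (fun ω => - η ω)))) := by
    rw [e1, e4]
    exact hleft
  have hR : Tendsto
      (fun lam : ℝ => (sublinE 𝒮 (fun ω => ξ ω + lam * η ω) - sublinE 𝒮 ξ) / lam)
      (𝓝[>] 0) (𝓝 (sublinECond 𝒮 ξ η)) := by
    rw [e1]
    exact hright
  refine ⟨part1, ?_⟩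
  have hF0' : sublinE 𝒮 (fun ω => ξ ω + (0:ℝ) * η ω) = sublinE 𝒮 ξ :=
    iSup_congr fun P => by simp
  have hslope : slope (fun lam : ℝ => sublinE 𝒮 (fun ω => ξ ω + lam * η ω)) 0
      = fun lam : ℝ => (sublinE 𝒮 (fun ω => ξ ω + lam * η ω) - sublinE 𝒮 ξ) / lam := by
    funext lam
    rw [slope_def_field]
    simp only [sub_zero]
    rw [hF0']
  constructor
  · intro hdiff
    have hd := hdiff.hasDerivAt
    rw [hasDerivAt_iff_tendsto_slope, hslope] at hd
    have hsubL : 𝓝[<] (0:ℝ) ≤ 𝓝[≠] (0:ℝ) := nhdsWithin_mono 0 fun x hx => ne_of_lt hx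
    have hsubR : 𝓝[>] (0:ℝ) ≤ 𝓝[≠] (0:ℝ) := nhdsWithin_mono 0 fun x hx => ne_of_gt hx
    have heq1 := tendsto_nhds_unique (hd.mono_left hsubL) part1
    have heq2 := tendsto_nhds_unique (hd.mono_left hsubR) hR
    rw [← heq2]
    exact heq1
  · intro heq
    have hBA : Tendsto
        (fun lam : ℝ => (sublinE 𝒮 (fun ω => ξ ω + lam * η ω) - sublinE 𝒮 ξ) / lam)
        (𝓝[<] 0) (𝓝 (sublinECond 𝒮 ξ η)) := by
      rw [heq]; exact part1
    have hslopetend : Tendsto (slope (fun lam : ℝ => sublinE 𝒮 (fun ω => ξ ω + lam * η ω)) 0)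
        (𝓝[≠] (0:ℝ)) (𝓝 (sublinECond 𝒮 ξ η)) := by
      rw [hslope, ← nhdsLT_sup_nhdsGT (0:ℝ), tendsto_sup]
      exact ⟨hBA, hR⟩
    exact (hasDerivAt_iff_tendsto_slope.mpr hslopetend).differentiableAt
end
end

section
/- Let ξ, η ∈ L¹(𝒫) and F(λ) := Ê[ξ + λη]. For every λ ∈ ℝ the one-sided derivatives of F at λ exist and satisfy F'₊(λ) = Ê_{ξ+λη}[η] and F'₋(λ) = −Ê_{ξ+λη}[−η]; moreover, for all λ < λ', −Ê_{ξ+λη}[−η] ≤ Ê_{ξ+λη}[η] ≤ (Ê[ξ+λ'η] − Ê[ξ+λη])/(λ'−λ) ≤ −Ê_{ξ+λ'η}[−η]. -/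
open MeasureTheory Filter Topology Set

noncomputable section

variable {Ω : Type*} [MeasurableSpace Ω] [TopologicalSpace Ω]

section Aux

variable {Ω : Type*} [MeasurableSpace Ω] [TopologicalSpace Ω] [BorelSpace Ω]
  [HasOuterApproxClosed Ω]
variable {𝒮 : Set (ProbabilityMeasure Ω)}

lemma memL1_continuousOn {ξ : Ω → ℝ} (hξ : MemL1 𝒮 ξ) :
    ContinuousOn (fun P : ProbabilityMeasure Ω => ∫ ω, ξ ω ∂(P : Measure Ω)) 𝒮 := by
  rw [continuousOn_iff_continuous_restrict]
  have hθ : ∀ n : ℕ, ∃ θ : BoundedContinuousFunction Ω ℝ,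
      ∀ P ∈ 𝒮, ∫ ω, |ξ ω - θ ω| ∂(P : Measure Ω) ≤ 1 / (n + 1) :=
    fun n => hξ.2.2 _ (by positivity)
  choose θ hθ using hθ
  have key : TendstoUniformly
      (fun (n : ℕ) (p : 𝒮) => ∫ ω, θ n ω ∂((p : ProbabilityMeasure Ω) : Measure Ω))
      (𝒮.restrict (fun P : ProbabilityMeasure Ω => ∫ ω, ξ ω ∂(P : Measure Ω))) atTop := by
    rw [Metric.tendstoUniformly_iff]
    intro ε hε
    obtain ⟨n0, hn0⟩ := exists_nat_one_div_lt hε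
    filter_upwards [eventually_ge_atTop n0] with n hn p
    have hint : Integrable ξ ((p : ProbabilityMeasure Ω) : Measure Ω) := hξ.2.1 p p.2
    have hintθ : Integrable (θ n) ((p : ProbabilityMeasure Ω) : Measure Ω) :=
      (θ n).integrable _
    show dist (∫ ω, ξ ω ∂((p : ProbabilityMeasure Ω) : Measure Ω))
        (∫ ω, θ n ω ∂((p : ProbabilityMeasure Ω) : Measure Ω)) < ε
    rw [Real.dist_eq, ← integral_sub hint hintθ]
    calc |∫ ω, (ξ ω - θ n ω) ∂((p : ProbabilityMeasure Ω) : Measure Ω)|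
        ≤ ∫ ω, |ξ ω - θ n ω| ∂((p : ProbabilityMeasure Ω) : Measure Ω) := by
          simpa [Real.norm_eq_abs] using
            norm_integral_le_integral_norm (μ := ((p : ProbabilityMeasure Ω) : Measure Ω))
              (fun ω => ξ ω - θ n ω)
      _ ≤ 1 / (n + 1) := hθ n p p.2
      _ ≤ 1 / (n0 + 1) := by
          apply one_div_le_one_div_of_le (by positivity)
          have : (n0 : ℝ) ≤ n := Nat.cast_le.2 hn
          linarith
      _ < ε := hn0
  exact key.continuous (Frequently.of_forall fun n =>
    (ProbabilityMeasure.continuous_integral_boundedContinuousFunction (θ n)).comp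
      continuous_subtype_val)

lemma sublin_aux (h𝒮c : IsCompact 𝒮) (h𝒮ne : 𝒮.Nonempty) {ξ : Ω → ℝ}
    (hg : ContinuousOn (fun P : ProbabilityMeasure Ω => ∫ ω, ξ ω ∂(P : Measure Ω)) 𝒮) :
    (∃ P ∈ 𝒮, ∫ ω, ξ ω ∂(P : Measure Ω) = sublinE 𝒮 ξ) ∧
      ∀ P ∈ 𝒮, ∫ ω, ξ ω ∂(P : Measure Ω) ≤ sublinE 𝒮 ξ := by
  obtain ⟨P0, hP0, hmax⟩ := h𝒮c.exists_isMaxOn h𝒮ne hg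
  have hmax' := isMaxOn_iff.1 hmax
  haveI : Nonempty 𝒮 := h𝒮ne.to_subtype
  have hbdd : BddAbove (range fun P : 𝒮 =>
      ∫ ω, ξ ω ∂((P : ProbabilityMeasure Ω) : Measure Ω)) := by
    refine ⟨∫ ω, ξ ω ∂(P0 : Measure Ω), ?_⟩
    rintro x ⟨p, rfl⟩
    exact hmax' _ p.2
  have hle : ∀ P ∈ 𝒮, ∫ ω, ξ ω ∂(P : Measure Ω) ≤ sublinE 𝒮 ξ :=
    fun P hP => le_ciSup hbdd (⟨P, hP⟩ : 𝒮)
  exact ⟨⟨P0, hP0, le_antisymm (hle P0 hP0) (ciSup_le fun p => hmax' _ p.2)⟩, hle⟩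

lemma isCompact_sep (h𝒮c : IsCompact 𝒮) {g : ProbabilityMeasure Ω → ℝ}
    (hg : ContinuousOn g 𝒮) {s : Set ℝ} (hs : IsClosed s) :
    IsCompact {P ∈ 𝒮 | g P ∈ s} := by
  have h1 : IsClosed (𝒮 ∩ g ⁻¹' s) :=
    hg.preimage_isClosed_of_isClosed h𝒮c.isClosed hs
  exact h𝒮c.of_isClosed_subset h1 inter_subset_left

lemma maximizers_isCompact (h𝒮c : IsCompact 𝒮) {ξ : Ω → ℝ}
    (hg : ContinuousOn (fun P : ProbabilityMeasure Ω => ∫ ω, ξ ω ∂(P : Measure Ω)) 𝒮) :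
    IsCompact (maximizers 𝒮 ξ) :=
  isCompact_sep h𝒮c hg (isClosed_singleton (x := sublinE 𝒮 ξ))

lemma cond_facts (h𝒮c : IsCompact 𝒮) (h𝒮ne : 𝒮.Nonempty) {ξc η : Ω → ℝ}
    (hξcc : ContinuousOn (fun P : ProbabilityMeasure Ω => ∫ ω, ξc ω ∂(P : Measure Ω)) 𝒮)
    (hηc : ContinuousOn (fun P : ProbabilityMeasure Ω => ∫ ω, η ω ∂(P : Measure Ω)) 𝒮) :
    (∃ P ∈ maximizers 𝒮 ξc, ∫ ω, η ω ∂(P : Measure Ω) = sublinECond 𝒮 ξc η) ∧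
      ∀ P ∈ maximizers 𝒮 ξc, ∫ ω, η ω ∂(P : Measure Ω) ≤ sublinECond 𝒮 ξc η := by
  have hMc : IsCompact (maximizers 𝒮 ξc) := maximizers_isCompact h𝒮c hξcc
  have hMne : (maximizers 𝒮 ξc).Nonempty := by
    obtain ⟨P, hP, h⟩ := (sublin_aux h𝒮c h𝒮ne hξcc).1
    exact ⟨P, hP, h⟩
  have hsub : maximizers 𝒮 ξc ⊆ 𝒮 := fun P hP => hP.1
  exact sublin_aux hMc hMne (hηc.mono hsub)

lemma int_lin {ξ η : Ω → ℝ} {P : ProbabilityMeasure Ω} (hξ : Integrable ξ (P : Measure Ω))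
    (hη : Integrable η (P : Measure Ω)) (lam : ℝ) :
    ∫ ω, (ξ ω + lam * η ω) ∂(P : Measure Ω)
      = ∫ ω, ξ ω ∂(P : Measure Ω) + lam * ∫ ω, η ω ∂(P : Measure Ω) := by
  rw [integral_add hξ (hη.const_mul lam), integral_const_mul]

lemma continuousOn_lin {ξ η : Ω → ℝ}
    (hξi : ∀ P ∈ 𝒮, Integrable ξ (P : Measure Ω)) (hηi : ∀ P ∈ 𝒮, Integrable η (P : Measure Ω))
    (hξc : ContinuousOn (fun P : ProbabilityMeasure Ω => ∫ ω, ξ ω ∂(P : Measure Ω)) 𝒮)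
    (hηc : ContinuousOn (fun P : ProbabilityMeasure Ω => ∫ ω, η ω ∂(P : Measure Ω)) 𝒮)
    (lam : ℝ) :
    ContinuousOn (fun P : ProbabilityMeasure Ω => ∫ ω, (ξ ω + lam * η ω) ∂(P : Measure Ω)) 𝒮 :=
  (hξc.add (continuousOn_const.mul hηc)).congr fun P hP => int_lin (hξi P hP) (hηi P hP) lam

lemma key_ineq (h𝒮c : IsCompact 𝒮) (h𝒮ne : 𝒮.Nonempty) {ξ η : Ω → ℝ}
    (hξi : ∀ P ∈ 𝒮, Integrable ξ (P : Measure Ω)) (hηi : ∀ P ∈ 𝒮, Integrable η (P : Measure Ω))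
    (hξc : ContinuousOn (fun P : ProbabilityMeasure Ω => ∫ ω, ξ ω ∂(P : Measure Ω)) 𝒮)
    (hηc : ContinuousOn (fun P : ProbabilityMeasure Ω => ∫ ω, η ω ∂(P : Measure Ω)) 𝒮)
    (lam mu : ℝ) {P : ProbabilityMeasure Ω}
    (hP : P ∈ maximizers 𝒮 (fun ω => ξ ω + lam * η ω)) :
    sublinE 𝒮 (fun ω => ξ ω + lam * η ω) + (mu - lam) * ∫ ω, η ω ∂(P : Measure Ω)
      ≤ sublinE 𝒮 (fun ω => ξ ω + mu * η ω) := by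
  have hP𝒮 : P ∈ 𝒮 := hP.1
  have h2 := (sublin_aux h𝒮c h𝒮ne (continuousOn_lin hξi hηi hξc hηc mu)).2 P hP𝒮
  have e1 := int_lin (hξi P hP𝒮) (hηi P hP𝒮) lam
  have e2 := int_lin (hξi P hP𝒮) (hηi P hP𝒮) mu
  have h3 : ∫ ω, (ξ ω + lam * η ω) ∂(P : Measure Ω)
      = sublinE 𝒮 (fun ω => ξ ω + lam * η ω) := hP.2
  have h4 : sublinE 𝒮 (fun ω => ξ ω + lam * η ω) + (mu - lam) * ∫ ω, η ω ∂(P : Measure Ω)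
      = ∫ ω, ξ ω ∂(P : Measure Ω) + mu * ∫ ω, η ω ∂(P : Measure Ω) := by
    rw [← h3, e1]; ring
  rw [h4, ← e2]
  exact h2

lemma neg_cond_le_cond (h𝒮c : IsCompact 𝒮) (h𝒮ne : 𝒮.Nonempty) {ξc η : Ω → ℝ}
    (hξcc : ContinuousOn (fun P : ProbabilityMeasure Ω => ∫ ω, ξc ω ∂(P : Measure Ω)) 𝒮)
    (hηc : ContinuousOn (fun P : ProbabilityMeasure Ω => ∫ ω, η ω ∂(P : Measure Ω)) 𝒮) :
    -(sublinECond 𝒮 ξc (fun ω => -η ω)) ≤ sublinECond 𝒮 ξc η := by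
  have hnegc : ContinuousOn (fun P : ProbabilityMeasure Ω => ∫ ω, -η ω ∂(P : Measure Ω)) 𝒮 :=
    hηc.neg.congr fun P _ => integral_neg η
  obtain ⟨P, hP, hPeq⟩ := (cond_facts h𝒮c h𝒮ne hξcc hnegc).1
  have h1 := (cond_facts h𝒮c h𝒮ne hξcc hηc).2 P hP
  have h2 : ∫ ω, -η ω ∂(P : Measure Ω) = -∫ ω, η ω ∂(P : Measure Ω) := integral_neg η
  linarith [hPeq ▸ h2.symm.trans hPeq]

lemma chain (h𝒮c : IsCompact 𝒮) (h𝒮ne : 𝒮.Nonempty) {ξ η : Ω → ℝ}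
    (hξi : ∀ P ∈ 𝒮, Integrable ξ (P : Measure Ω)) (hηi : ∀ P ∈ 𝒮, Integrable η (P : Measure Ω))
    (hξc : ContinuousOn (fun P : ProbabilityMeasure Ω => ∫ ω, ξ ω ∂(P : Measure Ω)) 𝒮)
    (hηc : ContinuousOn (fun P : ProbabilityMeasure Ω => ∫ ω, η ω ∂(P : Measure Ω)) 𝒮)
    {lam0 lam1 : ℝ} (h : lam0 < lam1) :
    sublinECond 𝒮 (fun ω => ξ ω + lam0 * η ω) η ≤
        (sublinE 𝒮 (fun ω => ξ ω + lam1 * η ω) - sublinE 𝒮 (fun ω => ξ ω + lam0 * η ω)) /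
          (lam1 - lam0) ∧
      (sublinE 𝒮 (fun ω => ξ ω + lam1 * η ω) - sublinE 𝒮 (fun ω => ξ ω + lam0 * η ω)) /
          (lam1 - lam0) ≤ -(sublinECond 𝒮 (fun ω => ξ ω + lam1 * η ω) (fun ω => -η ω)) := by
  have hc0 := continuousOn_lin hξi hηi hξc hηc lam0
  have hc1 := continuousOn_lin hξi hηi hξc hηc lam1
  have hd : (0 : ℝ) < lam1 - lam0 := sub_pos.2 h
  constructor
  · obtain ⟨P, hP, hPeq⟩ := (cond_facts h𝒮c h𝒮ne hc0 hηc).1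
    have hk := key_ineq h𝒮c h𝒮ne hξi hηi hξc hηc lam0 lam1 hP
    rw [← hPeq, le_div_iff₀ hd]
    have h3 : (lam1 - lam0) * (∫ ω, η ω ∂(P : Measure Ω))
        = (∫ ω, η ω ∂(P : Measure Ω)) * (lam1 - lam0) := mul_comm _ _
    linarith
  · have hnegc : ContinuousOn (fun P : ProbabilityMeasure Ω => ∫ ω, -η ω ∂(P : Measure Ω)) 𝒮 :=
      hηc.neg.congr fun P _ => integral_neg η
    obtain ⟨P, hP, hPeq⟩ := (cond_facts h𝒮c h𝒮ne hc1 hnegc).1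
    have hk := key_ineq h𝒮c h𝒮ne hξi hηi hξc hηc lam1 lam0 hP
    have h2 : ∫ ω, -η ω ∂(P : Measure Ω) = -∫ ω, η ω ∂(P : Measure Ω) := integral_neg η
    rw [div_le_iff₀ hd, ← hPeq, h2, neg_neg]
    have h3 : (lam0 - lam1) * (∫ ω, η ω ∂(P : Measure Ω))
        = -((∫ ω, η ω ∂(P : Measure Ω)) * (lam1 - lam0)) := by ring
    linarith

lemma right_deriv (h𝒮c : IsCompact 𝒮) (h𝒮ne : 𝒮.Nonempty) {ξ η : Ω → ℝ}
    (hξi : ∀ P ∈ 𝒮, Integrable ξ (P : Measure Ω)) (hηi : ∀ P ∈ 𝒮, Integrable η (P : Measure Ω))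
    (hξc : ContinuousOn (fun P : ProbabilityMeasure Ω => ∫ ω, ξ ω ∂(P : Measure Ω)) 𝒮)
    (hηc : ContinuousOn (fun P : ProbabilityMeasure Ω => ∫ ω, η ω ∂(P : Measure Ω)) 𝒮)
    (lam0 : ℝ) :
    Tendsto (fun lam : ℝ => (sublinE 𝒮 (fun ω => ξ ω + lam * η ω) -
        sublinE 𝒮 (fun ω => ξ ω + lam0 * η ω)) / (lam - lam0))
      (𝓝[>] lam0) (𝓝 (sublinECond 𝒮 (fun ω => ξ ω + lam0 * η ω) η)) := by
  have hcl := continuousOn_lin hξi hηi hξc hηc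
  rw [Metric.tendsto_nhdsWithin_nhds]
  intro ε hε
  obtain ⟨PB, hPB, hBmax⟩ := h𝒮c.exists_isMaxOn h𝒮ne hηc.abs
  have hBmax' := isMaxOn_iff.1 hBmax
  have hBpos : (0 : ℝ) < |∫ ω, η ω ∂(PB : Measure Ω)| + 1 := by positivity
  have hBle : ∀ P ∈ 𝒮, |∫ ω, η ω ∂(P : Measure Ω)| ≤ |∫ ω, η ω ∂(PB : Measure Ω)| + 1 :=
    fun P hP => by linarith [hBmax' P hP]
  have key : ∃ r > (0 : ℝ), ∀ lam : ℝ, lam0 < lam → lam - lam0 < r →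
      ∀ P ∈ maximizers 𝒮 (fun ω => ξ ω + lam * η ω),
        ∫ ω, η ω ∂(P : Measure Ω) < sublinECond 𝒮 (fun ω => ξ ω + lam0 * η ω) η + ε := by
    by_cases hC : ({P ∈ 𝒮 | ∫ ω, η ω ∂(P : Measure Ω) ∈
        Ici (sublinECond 𝒮 (fun ω => ξ ω + lam0 * η ω) η + ε)}).Nonempty
    · have hCc : IsCompact {P ∈ 𝒮 | ∫ ω, η ω ∂(P : Measure Ω) ∈
          Ici (sublinECond 𝒮 (fun ω => ξ ω + lam0 * η ω) η + ε)} :=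
        isCompact_sep h𝒮c hηc isClosed_Ici
      have hCsub : {P ∈ 𝒮 | ∫ ω, η ω ∂(P : Measure Ω) ∈
          Ici (sublinECond 𝒮 (fun ω => ξ ω + lam0 * η ω) η + ε)} ⊆ 𝒮 := fun P hP => hP.1
      obtain ⟨Q, hQ, hQmax⟩ := hCc.exists_isMaxOn hC ((hcl lam0).mono hCsub)
      have hQmax' := isMaxOn_iff.1 hQmax
      have hmle := (sublin_aux h𝒮c h𝒮ne (hcl lam0)).2 Q hQ.1
      have hmlt : ∫ ω, (ξ ω + lam0 * η ω) ∂(Q : Measure Ω)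
          < sublinE 𝒮 (fun ω => ξ ω + lam0 * η ω) := by
        rcases lt_or_eq_of_le hmle with hlt | heq
        · exact hlt
        · exfalso
          have hQM : Q ∈ maximizers 𝒮 (fun ω => ξ ω + lam0 * η ω) := ⟨hQ.1, heq⟩
          have h5 := (cond_facts h𝒮c h𝒮ne (hcl lam0) hηc).2 Q hQM
          have hQ2 : sublinECond 𝒮 (fun ω => ξ ω + lam0 * η ω) η + ε
              ≤ ∫ ω, η ω ∂(Q : Measure Ω) := hQ.2
          linarith
      refine ⟨(sublinE 𝒮 (fun ω => ξ ω + lam0 * η ω)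
          - ∫ ω, (ξ ω + lam0 * η ω) ∂(Q : Measure Ω)) / (2 * (|∫ ω, η ω ∂(PB : Measure Ω)| + 1)),
        div_pos (sub_pos.2 hmlt) (by linarith), fun lam h1 h2 P hP => ?_⟩
      by_contra hcon
      push_neg at hcon
      have hPC : P ∈ {P ∈ 𝒮 | ∫ ω, η ω ∂(P : Measure Ω) ∈
          Ici (sublinECond 𝒮 (fun ω => ξ ω + lam0 * η ω) η + ε)} := ⟨hP.1, hcon⟩
      have hpos : (0 : ℝ) < lam - lam0 := sub_pos.2 h1
      have e1 := int_lin (hξi P hP.1) (hηi P hP.1) lam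
      have e0 := int_lin (hξi P hP.1) (hηi P hP.1) lam0
      have hup : sublinE 𝒮 (fun ω => ξ ω + lam * η ω)
          ≤ ∫ ω, (ξ ω + lam0 * η ω) ∂(Q : Measure Ω)
            + (lam - lam0) * (|∫ ω, η ω ∂(PB : Measure Ω)| + 1) := by
        rw [← hP.2]
        have hq := hQmax' P hPC
        have hb := (abs_le.1 (hBle P hP.1)).2
        have hmul : (lam - lam0) * (∫ ω, η ω ∂(P : Measure Ω))
            ≤ (lam - lam0) * (|∫ ω, η ω ∂(PB : Measure Ω)| + 1) :=
          mul_le_mul_of_nonneg_left hb hpos.le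
        have hsplit : ∫ ω, (ξ ω + lam * η ω) ∂(P : Measure Ω)
            = ∫ ω, (ξ ω + lam0 * η ω) ∂(P : Measure Ω)
              + (lam - lam0) * ∫ ω, η ω ∂(P : Measure Ω) := by
          rw [e1, e0]; ring
        rw [hsplit]
        linarith
      obtain ⟨P0, hP0M, hP0eq⟩ := (cond_facts h𝒮c h𝒮ne (hcl lam0) hηc).1
      have hlow := key_ineq h𝒮c h𝒮ne hξi hηi hξc hηc lam0 lam hP0M
      have hb0 := (abs_le.1 (hBle P0 hP0M.1)).1
      have hmul0 : (lam - lam0) * (-(|∫ ω, η ω ∂(PB : Measure Ω)| + 1))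
          ≤ (lam - lam0) * ∫ ω, η ω ∂(P0 : Measure Ω) :=
        mul_le_mul_of_nonneg_left hb0 hpos.le
      have hr1 : (lam - lam0) * (-(|∫ ω, η ω ∂(PB : Measure Ω)| + 1))
          = -((lam - lam0) * (|∫ ω, η ω ∂(PB : Measure Ω)| + 1)) := by ring
      have h6 : (lam - lam0) * (2 * (|∫ ω, η ω ∂(PB : Measure Ω)| + 1))
          < sublinE 𝒮 (fun ω => ξ ω + lam0 * η ω)
            - ∫ ω, (ξ ω + lam0 * η ω) ∂(Q : Measure Ω) :=
        (lt_div_iff₀ (by linarith)).1 h2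
      have hr2 : (lam - lam0) * (2 * (|∫ ω, η ω ∂(PB : Measure Ω)| + 1))
          = 2 * ((lam - lam0) * (|∫ ω, η ω ∂(PB : Measure Ω)| + 1)) := by ring
      linarith
    · refine ⟨1, one_pos, fun lam h1 h2 P hP => ?_⟩
      by_contra hcon
      push_neg at hcon
      exact hC ⟨P, hP.1, hcon⟩
  obtain ⟨r, hr, hkey⟩ := key
  refine ⟨r, hr, ?_⟩
  intro lam hlam hd
  have h1 : lam0 < lam := hlam
  rw [Real.dist_eq] at hd
  have hd' : lam - lam0 < r := by
    have h := abs_lt.1 hd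
    linarith [h.2]
  obtain ⟨P1, hP1M, hP1eq⟩ := (cond_facts h𝒮c h𝒮ne (hcl lam) hηc).1
  have hlt := hkey lam h1 hd' P1 hP1M
  have hpos : (0 : ℝ) < lam - lam0 := sub_pos.2 h1
  have hk := key_ineq h𝒮c h𝒮ne hξi hηi hξc hηc lam lam0 hP1M
  have hub : (sublinE 𝒮 (fun ω => ξ ω + lam * η ω)
      - sublinE 𝒮 (fun ω => ξ ω + lam0 * η ω)) / (lam - lam0)
      ≤ ∫ ω, η ω ∂(P1 : Measure Ω) := by
    rw [div_le_iff₀ hpos]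
    have h3 : (lam0 - lam) * (∫ ω, η ω ∂(P1 : Measure Ω))
        = -((∫ ω, η ω ∂(P1 : Measure Ω)) * (lam - lam0)) := by ring
    linarith
  have hlb := (chain h𝒮c h𝒮ne hξi hηi hξc hηc h1).1
  rw [Real.dist_eq, abs_lt]
  constructor <;> linarith

lemma left_deriv (h𝒮c : IsCompact 𝒮) (h𝒮ne : 𝒮.Nonempty) {ξ η : Ω → ℝ}
    (hξi : ∀ P ∈ 𝒮, Integrable ξ (P : Measure Ω)) (hηi : ∀ P ∈ 𝒮, Integrable η (P : Measure Ω))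
    (hξc : ContinuousOn (fun P : ProbabilityMeasure Ω => ∫ ω, ξ ω ∂(P : Measure Ω)) 𝒮)
    (hηc : ContinuousOn (fun P : ProbabilityMeasure Ω => ∫ ω, η ω ∂(P : Measure Ω)) 𝒮)
    (lam0 : ℝ) :
    Tendsto (fun lam : ℝ => (sublinE 𝒮 (fun ω => ξ ω + lam * η ω) -
        sublinE 𝒮 (fun ω => ξ ω + lam0 * η ω)) / (lam - lam0))
      (𝓝[<] lam0) (𝓝 (-(sublinECond 𝒮 (fun ω => ξ ω + lam0 * η ω) (fun ω => -η ω)))) := by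
  have hξ'i : ∀ P ∈ 𝒮, Integrable (fun ω => ξ ω + 2 * lam0 * η ω) (P : Measure Ω) :=
    fun P hP => (hξi P hP).add ((hηi P hP).const_mul _)
  have hη'i : ∀ P ∈ 𝒮, Integrable (fun ω => -η ω) (P : Measure Ω) :=
    fun P hP => (hηi P hP).neg
  have hξ'c : ContinuousOn
      (fun P : ProbabilityMeasure Ω => ∫ ω, (ξ ω + 2 * lam0 * η ω) ∂(P : Measure Ω)) 𝒮 :=
    continuousOn_lin hξi hηi hξc hηc (2 * lam0)
  have hη'c : ContinuousOn (fun P : ProbabilityMeasure Ω => ∫ ω, -η ω ∂(P : Measure Ω)) 𝒮 :=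
    hηc.neg.congr fun P _ => integral_neg η
  have H := right_deriv h𝒮c h𝒮ne hξ'i hη'i hξ'c hη'c lam0
  beta_reduce at H
  have e2 : (fun ω => ξ ω + 2 * lam0 * η ω + lam0 * -η ω) = (fun ω => ξ ω + lam0 * η ω) := by
    funext ω; ring
  simp only [e2] at H
  have hmap : Tendsto (fun lam : ℝ => 2 * lam0 - lam) (𝓝[<] lam0) (𝓝[>] lam0) := by
    apply tendsto_nhdsWithin_of_tendsto_nhds_of_eventually_within
    · have h0 : Tendsto (fun lam : ℝ => 2 * lam0 - lam) (𝓝 lam0) (𝓝 (2 * lam0 - lam0)) :=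
        tendsto_const_nhds.sub tendsto_id
      rw [show 2 * lam0 - lam0 = lam0 by ring] at h0
      exact h0.mono_left nhdsWithin_le_nhds
    · filter_upwards [self_mem_nhdsWithin] with x hx
      simp only [mem_Iio] at hx
      simp only [mem_Ioi]
      linarith
  have H2 : Tendsto (fun lam : ℝ =>
      -((sublinE 𝒮 (fun ω => ξ ω + 2 * lam0 * η ω + (2 * lam0 - lam) * -η ω) -
          sublinE 𝒮 (fun ω => ξ ω + lam0 * η ω)) / ((2 * lam0 - lam) - lam0)))
      (𝓝[<] lam0)
      (𝓝 (-(sublinECond 𝒮 (fun ω => ξ ω + lam0 * η ω) (fun ω => -η ω)))) :=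
    (H.comp hmap).neg
  refine H2.congr fun lam => ?_
  have e3 : (fun ω => ξ ω + 2 * lam0 * η ω + (2 * lam0 - lam) * -η ω)
      = (fun ω => ξ ω + lam * η ω) := by
    funext ω; ring
  rw [e3, show (2 * lam0 - lam) - lam0 = -(lam - lam0) by ring, div_neg, neg_neg]

end Aux

/-- for every `λ` the one-sided derivatives of `F(λ) = Ê[ξ + λη]` exist, with
`F'₊(λ) = Ê_{ξ+λη}[η]`, `F'₋(λ) = −Ê_{ξ+λη}[−η]`, and for `λ < λ'` the monotone chain of
inequalities holds. -/
theorem stmt_9 {Ω : Type*} [MeasurableSpace Ω] [TopologicalSpace Ω] [PolishSpace Ω] [BorelSpace Ω]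
    (𝒮 : Set (ProbabilityMeasure Ω)) (h𝒮ne : 𝒮.Nonempty) (h𝒮c : IsCompact 𝒮)
    (ξ η : Ω → ℝ) (hξ : MemL1 𝒮 ξ) (hη : MemL1 𝒮 η) :
    (∀ lam0 : ℝ,
      Tendsto
        (fun lam : ℝ => (sublinE 𝒮 (fun ω => ξ ω + lam * η ω) -
            sublinE 𝒮 (fun ω => ξ ω + lam0 * η ω)) / (lam - lam0))
        (𝓝[>] lam0) (𝓝 (sublinECond 𝒮 (fun ω => ξ ω + lam0 * η ω) η)) ∧
      Tendsto
        (fun lam : ℝ => (sublinE 𝒮 (fun ω => ξ ω + lam * η ω) -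
            sublinE 𝒮 (fun ω => ξ ω + lam0 * η ω)) / (lam - lam0))
        (𝓝[<] lam0)
        (𝓝 (-(sublinECond 𝒮 (fun ω => ξ ω + lam0 * η ω) (fun ω => - η ω))))) ∧
    (∀ lam0 lam1 : ℝ, lam0 < lam1 →
      -(sublinECond 𝒮 (fun ω => ξ ω + lam0 * η ω) (fun ω => - η ω)) ≤
          sublinECond 𝒮 (fun ω => ξ ω + lam0 * η ω) η ∧
      sublinECond 𝒮 (fun ω => ξ ω + lam0 * η ω) η ≤
          (sublinE 𝒮 (fun ω => ξ ω + lam1 * η ω) - sublinE 𝒮 (fun ω => ξ ω + lam0 * η ω)) /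
            (lam1 - lam0) ∧
      (sublinE 𝒮 (fun ω => ξ ω + lam1 * η ω) - sublinE 𝒮 (fun ω => ξ ω + lam0 * η ω)) /
            (lam1 - lam0) ≤
          -(sublinECond 𝒮 (fun ω => ξ ω + lam1 * η ω) (fun ω => - η ω))) := by
  have hξi := hξ.2.1
  have hηi := hη.2.1
  have hξc := memL1_continuousOn hξ
  have hηc := memL1_continuousOn hη
  refine ⟨fun lam0 => ⟨right_deriv h𝒮c h𝒮ne hξi hηi hξc hηc lam0,
      left_deriv h𝒮c h𝒮ne hξi hηi hξc hηc lam0⟩, fun lam0 lam1 h => ?_⟩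
  have hc0 := continuousOn_lin hξi hηi hξc hηc lam0
  exact ⟨neg_cond_le_cond h𝒮c h𝒮ne hc0 hηc, (chain h𝒮c h𝒮ne hξi hηi hξc hηc h).1,
    (chain h𝒮c h𝒮ne hξi hηi hξc hηc h).2⟩
end
end

section
/- Let φ : ℝ → ℝ be differentiable with derivative φ' bounded and Lipschitz continuous, and let ξ, η ∈ L¹(𝒫) satisfy sup_{P∈𝒫} ∫_Ω η² dP < ∞. Then φ(ξ + λη) ∈ L¹(𝒫) for every λ ∈ ℝ and φ'(ξ)η ∈ L¹(𝒫), and for H(λ) := Ê[φ(ξ + λη)] one has: (i) the right derivative of H at 0 exists and H'₊(0) = Ê_{φ(ξ)}[φ'(ξ)η]; (ii) the left derivative of H at 0 exists and H'₋(0) = −Ê_{φ(ξ)}[−φ'(ξ)η]. -/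
open MeasureTheory Filter Topology Set

noncomputable section

variable {Ω : Type*} [MeasurableSpace Ω] [TopologicalSpace Ω]

/- ### Auxiliary lemmas -/

lemma taylor_aux {φ : ℝ → ℝ} (hφdiff : Differentiable ℝ φ) {K : NNReal}
    (hφ'lip : LipschitzWith K (deriv φ)) (x a : ℝ) :
    |φ (x + a) - φ x - a * deriv φ x| ≤ K * a ^ 2 := by
  set g : ℝ → ℝ := fun y => φ y - y * deriv φ x with hg
  have hsub : ∀ y ∈ uIcc x (x + a), |y - x| ≤ |a| := by
    intro y hy
    rcases Set.mem_uIcc.mp hy with ⟨h1, h2⟩ | ⟨h1, h2⟩ <;> rw [abs_le] <;>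
      constructor <;> nlinarith [le_abs_self a, neg_abs_le a]
  have key : ‖g (x + a) - g x‖ ≤ (K * |a|) * ‖(x + a) - x‖ := by
    refine (convex_uIcc x (x + a)).norm_image_sub_le_of_norm_hasDerivWithin_le
      (f' := fun y => deriv φ y - deriv φ x) (fun y _ => ?_) (fun y hy => ?_)
      (left_mem_uIcc) (right_mem_uIcc)
    · exact ((hφdiff y).hasDerivAt.sub (hasDerivAt_mul_const _)).hasDerivWithinAt
    · have h1 : dist (deriv φ y) (deriv φ x) ≤ K * dist y x := hφ'lip.dist_le_mul y x
      rw [Real.dist_eq, Real.dist_eq] at h1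
      calc ‖deriv φ y - deriv φ x‖ = |deriv φ y - deriv φ x| := Real.norm_eq_abs _
        _ ≤ K * |y - x| := h1
        _ ≤ K * |a| := mul_le_mul_of_nonneg_left (hsub y hy) K.2
  have h2 : g (x + a) - g x = φ (x + a) - φ x - a * deriv φ x := by simp [hg]; ring
  rw [h2, Real.norm_eq_abs] at key
  calc |φ (x + a) - φ x - a * deriv φ x| ≤ (K * |a|) * ‖(x + a) - x‖ := key
    _ = K * a ^ 2 := by
        rw [Real.norm_eq_abs]; simp; rw [mul_assoc, ← abs_mul, ← sq, abs_pow, sq_abs]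

lemma integral_dist_le {P : ProbabilityMeasure Ω} {ζ : Ω → ℝ}
    (hint : Integrable ζ (P : Measure Ω)) (θ : BoundedContinuousFunction Ω ℝ)
    [OpensMeasurableSpace Ω] :
    |∫ ω, ζ ω ∂(P : Measure Ω) - ∫ ω, θ ω ∂(P : Measure Ω)| ≤
      ∫ ω, |ζ ω - θ ω| ∂(P : Measure Ω) := by
  rw [← integral_sub hint (θ.integrable _)]
  simpa [Real.norm_eq_abs] using
    norm_integral_le_integral_norm (μ := (P : Measure Ω)) (fun ω => ζ ω - θ ω)

lemma cont_integral [OpensMeasurableSpace Ω] (𝒮 : Set (ProbabilityMeasure Ω)) {ζ : Ω → ℝ}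
    (hζ : MemL1 𝒮 ζ) :
    Continuous (fun P : 𝒮 => ∫ ω, ζ ω ∂((P : ProbabilityMeasure Ω) : Measure Ω)) := by
  have happrox : ∀ n : ℕ, ∃ θ : BoundedContinuousFunction Ω ℝ,
      ∀ P ∈ 𝒮, ∫ ω, |ζ ω - θ ω| ∂(P : Measure Ω) ≤ 1 / (n + 1) :=
    fun n => hζ.2.2 (1 / (n + 1)) (by positivity)
  choose θ hθ using happrox
  have hTU : TendstoUniformly
      (fun n (P : 𝒮) => ∫ ω, (θ n) ω ∂((P : ProbabilityMeasure Ω) : Measure Ω))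
      (fun P : 𝒮 => ∫ ω, ζ ω ∂((P : ProbabilityMeasure Ω) : Measure Ω)) atTop := by
    rw [Metric.tendstoUniformly_iff]
    intro ε hε
    obtain ⟨N, hN⟩ := exists_nat_one_div_lt hε
    filter_upwards [eventually_ge_atTop N] with n hn P
    have h1 : |∫ ω, ζ ω ∂((P : ProbabilityMeasure Ω) : Measure Ω) -
        ∫ ω, (θ n) ω ∂((P : ProbabilityMeasure Ω) : Measure Ω)| ≤ 1 / (n + 1) :=
      le_trans (integral_dist_le (hζ.2.1 P P.2) (θ n)) (hθ n P P.2)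
    rw [Real.dist_eq]
    refine lt_of_le_of_lt h1 (lt_of_le_of_lt ?_ hN)
    apply one_div_le_one_div_of_le (by positivity)
    have := (Nat.cast_le (α := ℝ)).mpr hn; linarith
  refine hTU.continuous (Frequently.of_forall fun n => ?_)
  exact (ProbabilityMeasure.continuous_integral_boundedContinuousFunction (θ n)).comp
    continuous_subtype_val

lemma danskin {X : Type*} [TopologicalSpace X] [CompactSpace X] [Nonempty X]
    (u v : X → ℝ) (hu : Continuous u) (hv : Continuous v)
    (f : ℝ → X → ℝ) (C : ℝ)
    (hf : ∀ lam x, |f lam x - (u x + lam * v x)| ≤ C * lam ^ 2) :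
    Tendsto (fun lam => ((⨆ x, f lam x) - ⨆ x, u x) / lam) (𝓝[>] 0)
      (𝓝 (⨆ x : {x : X // u x = ⨆ y, u y}, v x)) := by
  obtain ⟨z⟩ := ‹Nonempty X›
  have hC : 0 ≤ C := by have h := hf 1 z; have := abs_nonneg (f 1 z - (u z + 1 * v z)); nlinarith
  obtain ⟨x0, -, hx0⟩ := isCompact_univ.exists_isMaxOn univ_nonempty hu.continuousOn
  simp only [isMaxOn_iff, mem_univ, forall_true_left] at hx0
  have hubdd : BddAbove (range u) := ⟨u x0, by rintro _ ⟨x, rfl⟩; exact hx0 x⟩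
  set S0 : ℝ := ⨆ y, u y with hS0
  have hS0eq : S0 = u x0 := le_antisymm (ciSup_le hx0) (le_ciSup hubdd x0)
  haveI : Nonempty {x : X // u x = S0} := ⟨⟨x0, hS0eq.symm⟩⟩
  clear_value S0
  set A : Set X := {x | u x = S0} with hA
  have hx0A : x0 ∈ A := hS0eq.symm
  have hAclosed : IsClosed A := isClosed_eq hu continuous_const
  have hAcomp : IsCompact A := hAclosed.isCompact
  obtain ⟨xs, hxsA, hxs⟩ := hAcomp.exists_isMaxOn ⟨x0, hx0A⟩ hv.continuousOn
  have hvA : ∀ x ∈ A, v x ≤ v xs := fun x hx => hxs hx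
  set V : ℝ := ⨆ x : {x : X // u x = S0}, v x with hV
  have hVbdd : BddAbove (range fun x : {x : X // u x = S0} => v x) :=
    ⟨v xs, by rintro _ ⟨⟨x, hx⟩, rfl⟩; exact hvA x hx⟩
  have hVeq : V = v xs := by
    refine le_antisymm (ciSup_le fun x => hvA x.1 x.2) (le_ciSup hVbdd ⟨xs, hxsA⟩)
  clear_value V
  obtain ⟨xm, -, hxm⟩ :=
    isCompact_univ.exists_isMaxOn univ_nonempty (continuous_abs.comp hv).continuousOn
  set Mv : ℝ := |v xm| with hMv
  have hvbd : ∀ x, |v x| ≤ Mv := fun x => hxm (mem_univ x)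
  clear_value Mv
  have hfbdd : ∀ lam : ℝ, 0 ≤ lam → BddAbove (range (f lam)) := by
    intro lam hlam
    refine ⟨S0 + lam * Mv + C * lam ^ 2, ?_⟩
    rintro _ ⟨x, rfl⟩
    have h1 := (abs_le.1 (hf lam x)).2
    have h2 := (abs_le.1 (hvbd x)).2
    nlinarith [hx0 x, hS0eq]
  -- lower bound
  have hlow : ∀ lam : ℝ, 0 < lam → V - C * lam ≤ ((⨆ x, f lam x) - S0) / lam := by
    intro lam hlam
    have h1 : f lam xs ≤ ⨆ x, f lam x := le_ciSup (hfbdd lam hlam.le) xs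
    have h2 := (abs_le.1 (hf lam xs)).1
    have h3 : u xs = S0 := hxsA
    rw [le_div_iff₀ hlam]
    nlinarith [hVeq, h3]
  -- upper bound
  have hup : ∀ ε : ℝ, 0 < ε → ∃ δ : ℝ, 0 < δ ∧ ∀ lam : ℝ, 0 < lam → lam < δ →
      ((⨆ x, f lam x) - S0) / lam ≤ V + ε / 2 + C * lam := by
    intro ε hε
    set B : Set X := {x | V + ε / 2 ≤ v x} with hB
    have hBclosed : IsClosed B := isClosed_le continuous_const hv
    have hBcomp : IsCompact B := hBclosed.isCompact
    have hAB : ∀ x ∈ A, x ∉ B := by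
      intro x hx hxB
      have h1 : v x ≤ v xs := hvA x hx
      have h2 : V + ε / 2 ≤ v x := hxB
      rw [hVeq] at h2; linarith
    have key : ∃ δ : ℝ, 0 < δ ∧ ∀ lam : ℝ, 0 < lam → lam < δ →
        ∀ x, u x + lam * v x ≤ S0 + lam * (V + ε / 2) := by
      rcases eq_empty_or_nonempty B with hBe | hBne
      · refine ⟨1, one_pos, fun lam hlam _ x => ?_⟩
        have hxB : x ∉ B := by rw [hBe]; exact notMem_empty x
        have h1 : v x < V + ε / 2 := by simpa [hB, not_le] using hxB
        have h2 : lam * v x ≤ lam * (V + ε / 2) :=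
          mul_le_mul_of_nonneg_left h1.le hlam.le
        have h3 : u x ≤ S0 := hS0eq ▸ hx0 x
        linarith
      · obtain ⟨x1, hx1B, hx1⟩ := hBcomp.exists_isMaxOn hBne hu.continuousOn
        have hS1 : u x1 < S0 := by
          have hle : u x1 ≤ S0 := by rw [hS0eq]; exact hx0 x1
          rcases lt_or_eq_of_le hle with h | h
          · exact h
          · exact absurd hx1B (hAB x1 h)
        set D : ℝ := Mv - V - ε / 2 with hD
        clear_value D
        refine ⟨(S0 - u x1) / (|D| + 1), div_pos (by linarith) (by positivity),
          fun lam hlam hlamδ x => ?_⟩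
        by_cases hxB : x ∈ B
        · have h1 : u x ≤ u x1 := hx1 hxB
          have h2 : v x ≤ Mv := (abs_le.1 (hvbd x)).2
          have h3 : lam * D ≤ S0 - u x1 := by
            have h4 : lam * D ≤ lam * (|D| + 1) :=
              mul_le_mul_of_nonneg_left (by nlinarith [le_abs_self D]) hlam.le
            have h5 : lam * (|D| + 1) ≤ S0 - u x1 :=
              ((lt_div_iff₀ (by positivity)).1 hlamδ).le
            linarith
          have h6 : lam * v x ≤ lam * Mv := mul_le_mul_of_nonneg_left h2 hlam.le
          have h7 : lam * D = lam * Mv - lam * (V + ε / 2) := by rw [hD]; ring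
          nlinarith [h1, h3, h6, h7]
        · have h1 : v x < V + ε / 2 := by simpa [hB, not_le] using hxB
          have h2 : lam * v x ≤ lam * (V + ε / 2) :=
            mul_le_mul_of_nonneg_left h1.le hlam.le
          have h3 : u x ≤ S0 := hS0eq ▸ hx0 x
          linarith
    obtain ⟨δ, hδ, hkey⟩ := key
    refine ⟨δ, hδ, fun lam hlam hlamδ => ?_⟩
    have hsup : (⨆ x, f lam x) ≤ S0 + lam * (V + ε / 2) + C * lam ^ 2 := by
      refine ciSup_le fun x => ?_
      have h1 := (abs_le.1 (hf lam x)).2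
      have h2 := hkey lam hlam hlamδ x
      nlinarith
    rw [div_le_iff₀ hlam]
    nlinarith
  rw [Metric.tendsto_nhdsWithin_nhds]
  intro ε hε
  obtain ⟨δ1, hδ1, hupε⟩ := hup ε hε
  refine ⟨min δ1 (ε / (2 * (C + 1))), lt_min hδ1 (by positivity), fun lam hlamIoi hlamd => ?_⟩
  have hlam : 0 < lam := hlamIoi
  rw [Real.dist_eq, sub_zero] at hlamd
  have hlamabs : lam < min δ1 (ε / (2 * (C + 1))) := lt_of_abs_lt hlamd
  have hd1 : lam < δ1 := lt_of_lt_of_le hlamabs (min_le_left _ _)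
  have hd2 : lam < ε / (2 * (C + 1)) := lt_of_lt_of_le hlamabs (min_le_right _ _)
  have hClam : C * lam < ε / 2 := by
    rw [lt_div_iff₀ (by positivity)] at hd2
    nlinarith
  have h1 := hlow lam hlam
  have h2 := hupε lam hlam hd1
  rw [Real.dist_eq, abs_lt]
  constructor <;> nlinarith

lemma memL1_neg {𝒮 : Set (ProbabilityMeasure Ω)} {ξ : Ω → ℝ} (hξ : MemL1 𝒮 ξ) :
    MemL1 𝒮 (fun ω => -ξ ω) := by
  refine ⟨hξ.1.neg, fun P hP => (hξ.2.1 P hP).neg, fun δ hδ => ?_⟩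
  obtain ⟨θ, hθ⟩ := hξ.2.2 δ hδ
  refine ⟨-θ, fun P hP => le_trans (le_of_eq ?_) (hθ P hP)⟩
  congr 1; funext ω
  simp only [BoundedContinuousFunction.coe_neg, Pi.neg_apply]
  rw [← abs_neg]
  congr 1; ring

lemma memL1_comp [OpensMeasurableSpace Ω] {𝒮 : Set (ProbabilityMeasure Ω)}
    {φ : ℝ → ℝ} (hφdiff : Differentiable ℝ φ) {M : ℝ} (hφ'bd : ∀ x, |deriv φ x| ≤ M)
    {ξ η : Ω → ℝ} (hξ : MemL1 𝒮 ξ) (hη : MemL1 𝒮 η) (lam : ℝ) :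
    MemL1 𝒮 (fun ω => φ (ξ ω + lam * η ω)) := by
  have hM : 0 ≤ M := le_trans (abs_nonneg _) (hφ'bd 0)
  have hφlip : ∀ a b : ℝ, |φ a - φ b| ≤ M * |a - b| := by
    intro a b
    have := convex_univ.norm_image_sub_le_of_norm_deriv_le
      (f := φ) (fun x _ => hφdiff x) (fun x _ => by rw [Real.norm_eq_abs]; exact hφ'bd x)
      (mem_univ b) (mem_univ a)
    simpa [Real.norm_eq_abs] using this
  have hmeas : Measurable fun ω => φ (ξ ω + lam * η ω) :=
    (hφdiff.continuous.measurable).comp (hξ.1.add (hη.1.const_mul lam))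
  have hint : ∀ P ∈ 𝒮, Integrable (fun ω => φ (ξ ω + lam * η ω)) (P : Measure Ω) := by
    intro P hP
    have hint0 : Integrable (fun ω => ξ ω + lam * η ω) (P : Measure Ω) :=
      (hξ.2.1 P hP).add ((hη.2.1 P hP).const_mul lam)
    refine Integrable.mono' (g := fun ω => |φ 0| + M * |ξ ω + lam * η ω|)
      (integrable_const _ |>.add (hint0.abs.const_mul M)) hmeas.aestronglyMeasurable ?_
    filter_upwards with ω
    rw [Real.norm_eq_abs]
    have h1 := hφlip (ξ ω + lam * η ω) 0
    simp only [sub_zero] at h1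
    calc |φ (ξ ω + lam * η ω)| ≤ |φ 0| + |φ (ξ ω + lam * η ω) - φ 0| := by
          nlinarith [abs_sub_abs_le_abs_sub (φ (ξ ω + lam * η ω)) (φ 0)]
      _ ≤ |φ 0| + M * |ξ ω + lam * η ω| := by linarith
  refine ⟨hmeas, hint, fun δ hδ => ?_⟩
  obtain ⟨θ₁, hθ₁⟩ := hξ.2.2 (δ / (2 * (M + 1))) (by positivity)
  obtain ⟨θ₂, hθ₂⟩ := hη.2.2 (δ / (2 * (M + 1) * (|lam| + 1))) (by positivity)
  have hφLW : LipschitzWith M.toNNReal φ := by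
    rw [lipschitzWith_iff_dist_le_mul]
    intro a b
    rw [Real.dist_eq, Real.dist_eq]
    calc |φ a - φ b| ≤ M * |a - b| := hφlip a b
      _ = M.toNNReal * |a - b| := by rw [Real.coe_toNNReal M hM]
  refine ⟨BoundedContinuousFunction.comp φ hφLW (θ₁ + lam • θ₂), fun P hP => ?_⟩
  have hcoe : ∀ ω, (BoundedContinuousFunction.comp φ hφLW (θ₁ + lam • θ₂)) ω
      = φ (θ₁ ω + lam * θ₂ ω) := fun ω => rfl
  have hbound : ∀ ω, |φ (ξ ω + lam * η ω) -
      (BoundedContinuousFunction.comp φ hφLW (θ₁ + lam • θ₂)) ω|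
      ≤ M * |ξ ω - θ₁ ω| + M * |lam| * |η ω - θ₂ ω| := by
    intro ω
    rw [hcoe]
    calc |φ (ξ ω + lam * η ω) - φ (θ₁ ω + lam * θ₂ ω)|
        ≤ M * |(ξ ω + lam * η ω) - (θ₁ ω + lam * θ₂ ω)| := hφlip _ _
      _ ≤ M * (|ξ ω - θ₁ ω| + |lam| * |η ω - θ₂ ω|) := by
          apply mul_le_mul_of_nonneg_left _ hM
          calc |(ξ ω + lam * η ω) - (θ₁ ω + lam * θ₂ ω)|
              = |(ξ ω - θ₁ ω) + lam * (η ω - θ₂ ω)| := by ring_nf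
            _ ≤ |ξ ω - θ₁ ω| + |lam * (η ω - θ₂ ω)| := abs_add_le _ _
            _ = |ξ ω - θ₁ ω| + |lam| * |η ω - θ₂ ω| := by rw [abs_mul]
      _ = M * |ξ ω - θ₁ ω| + M * |lam| * |η ω - θ₂ ω| := by ring
  have hint1 : Integrable (fun ω => |ξ ω - θ₁ ω|) (P : Measure Ω) :=
    ((hξ.2.1 P hP).sub (θ₁.integrable _)).abs
  have hint2 : Integrable (fun ω => |η ω - θ₂ ω|) (P : Measure Ω) :=
    ((hη.2.1 P hP).sub (θ₂.integrable _)).abs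
  have hintL : Integrable (fun ω => |φ (ξ ω + lam * η ω) -
      (BoundedContinuousFunction.comp φ hφLW (θ₁ + lam • θ₂)) ω|) (P : Measure Ω) :=
    ((hint P hP).sub ((BoundedContinuousFunction.comp φ hφLW (θ₁ + lam • θ₂)).integrable _)).abs
  calc ∫ ω, |φ (ξ ω + lam * η ω) -
        (BoundedContinuousFunction.comp φ hφLW (θ₁ + lam • θ₂)) ω| ∂(P : Measure Ω)
      ≤ ∫ ω, (M * |ξ ω - θ₁ ω| + M * |lam| * |η ω - θ₂ ω|) ∂(P : Measure Ω) := by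
        exact integral_mono hintL ((hint1.const_mul M).add (hint2.const_mul (M * |lam|)))
          fun ω => hbound ω
    _ = M * ∫ ω, |ξ ω - θ₁ ω| ∂(P : Measure Ω)
        + M * |lam| * ∫ ω, |η ω - θ₂ ω| ∂(P : Measure Ω) := by
        rw [integral_add (hint1.const_mul M) (hint2.const_mul (M * |lam|)),
          integral_const_mul, integral_const_mul]
    _ ≤ M * (δ / (2 * (M + 1))) + M * |lam| * (δ / (2 * (M + 1) * (|lam| + 1))) := by
        have e1 : (0:ℝ) ≤ ∫ ω, |ξ ω - θ₁ ω| ∂(P : Measure Ω) :=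
          integral_nonneg fun ω => abs_nonneg _
        have e2 : (0:ℝ) ≤ ∫ ω, |η ω - θ₂ ω| ∂(P : Measure Ω) :=
          integral_nonneg fun ω => abs_nonneg _
        have := hθ₁ P hP; have := hθ₂ P hP
        have hMl : 0 ≤ M * |lam| := mul_nonneg hM (abs_nonneg _)
        nlinarith
    _ ≤ δ := by
        rw [div_eq_mul_inv, div_eq_mul_inv]
        have hq1 : M * (δ * (2 * (M + 1))⁻¹) ≤ δ / 2 := by
          rw [div_eq_mul_inv, mul_comm M, mul_assoc]
          have : M * (2 * (M+1))⁻¹ ≤ (2:ℝ)⁻¹ := by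
            rw [mul_inv_le_iff₀ (by positivity)]
            nlinarith
          nlinarith [hδ.le]
        have hq2 : M * |lam| * (δ * (2 * (M + 1) * (|lam| + 1))⁻¹) ≤ δ / 2 := by
          rw [div_eq_mul_inv, mul_comm (M * |lam|), mul_assoc]
          have : M * |lam| * (2 * (M+1) * (|lam|+1))⁻¹ ≤ (2:ℝ)⁻¹ := by
            rw [mul_inv_le_iff₀ (by positivity)]
            nlinarith [abs_nonneg lam]
          nlinarith [hδ.le, mul_nonneg hM (abs_nonneg lam)]
        linarith

lemma memL1_deriv_mul [OpensMeasurableSpace Ω] {𝒮 : Set (ProbabilityMeasure Ω)}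
    {φ : ℝ → ℝ} {M : ℝ} (hφ'bd : ∀ x, |deriv φ x| ≤ M)
    {K : NNReal} (hφ'lip : LipschitzWith K (deriv φ))
    {ξ η : Ω → ℝ} (hξ : MemL1 𝒮 ξ) (hη : MemL1 𝒮 η) :
    MemL1 𝒮 (fun ω => deriv φ (ξ ω) * η ω) := by
  have hM : 0 ≤ M := le_trans (abs_nonneg _) (hφ'bd 0)
  have hKlip : ∀ a b : ℝ, |deriv φ a - deriv φ b| ≤ K * |a - b| := by
    intro a b
    have := hφ'lip.dist_le_mul a b
    rwa [Real.dist_eq, Real.dist_eq] at this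
  have hmeas : Measurable fun ω => deriv φ (ξ ω) * η ω :=
    ((hφ'lip.continuous.measurable).comp hξ.1).mul hη.1
  have hint : ∀ P ∈ 𝒮, Integrable (fun ω => deriv φ (ξ ω) * η ω) (P : Measure Ω) := by
    intro P hP
    refine Integrable.mono' ((hη.2.1 P hP).abs.const_mul M) hmeas.aestronglyMeasurable ?_
    filter_upwards with ω
    rw [Real.norm_eq_abs, abs_mul]
    exact mul_le_mul_of_nonneg_right (hφ'bd _) (abs_nonneg _)
  refine ⟨hmeas, hint, fun δ hδ => ?_⟩
  obtain ⟨θ₂, hθ₂⟩ := hη.2.2 (δ / (2 * (M + 1))) (by positivity)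
  set B : ℝ := ‖θ₂‖ with hB
  have hB0 : 0 ≤ B := norm_nonneg _
  have hθ₂bd : ∀ ω, |θ₂ ω| ≤ B := fun ω => by
    rw [← Real.norm_eq_abs]; exact θ₂.norm_coe_le_norm ω
  obtain ⟨θ₁, hθ₁⟩ := hξ.2.2 (δ / (2 * ((K : ℝ) + 1) * (B + 1))) (by positivity)
  set θc : BoundedContinuousFunction Ω ℝ :=
    (BoundedContinuousFunction.comp (deriv φ) hφ'lip θ₁) * θ₂ with hθc
  have hcoe : ∀ ω, θc ω = deriv φ (θ₁ ω) * θ₂ ω := fun ω => rfl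
  have hbound : ∀ ω, |deriv φ (ξ ω) * η ω - θc ω|
      ≤ M * |η ω - θ₂ ω| + (K : ℝ) * B * |ξ ω - θ₁ ω| := by
    intro ω
    rw [hcoe]
    have h1 : deriv φ (ξ ω) * η ω - deriv φ (θ₁ ω) * θ₂ ω
        = deriv φ (ξ ω) * (η ω - θ₂ ω) + (deriv φ (ξ ω) - deriv φ (θ₁ ω)) * θ₂ ω := by ring
    rw [h1]
    calc |deriv φ (ξ ω) * (η ω - θ₂ ω) + (deriv φ (ξ ω) - deriv φ (θ₁ ω)) * θ₂ ω|
        ≤ |deriv φ (ξ ω) * (η ω - θ₂ ω)| + |(deriv φ (ξ ω) - deriv φ (θ₁ ω)) * θ₂ ω| :=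
          abs_add_le _ _
      _ = |deriv φ (ξ ω)| * |η ω - θ₂ ω| + |deriv φ (ξ ω) - deriv φ (θ₁ ω)| * |θ₂ ω| := by
          rw [abs_mul, abs_mul]
      _ ≤ M * |η ω - θ₂ ω| + ((K : ℝ) * |ξ ω - θ₁ ω|) * B := by
          refine add_le_add (mul_le_mul_of_nonneg_right (hφ'bd _) (abs_nonneg _)) ?_
          exact mul_le_mul (hKlip _ _) (hθ₂bd ω) (abs_nonneg _)
            (mul_nonneg K.2 (abs_nonneg _))
      _ = M * |η ω - θ₂ ω| + (K : ℝ) * B * |ξ ω - θ₁ ω| := by ring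
  refine ⟨θc, fun P hP => ?_⟩
  have hint1 : Integrable (fun ω => |ξ ω - θ₁ ω|) (P : Measure Ω) :=
    ((hξ.2.1 P hP).sub (θ₁.integrable _)).abs
  have hint2 : Integrable (fun ω => |η ω - θ₂ ω|) (P : Measure Ω) :=
    ((hη.2.1 P hP).sub (θ₂.integrable _)).abs
  have hintL : Integrable (fun ω => |deriv φ (ξ ω) * η ω - θc ω|) (P : Measure Ω) :=
    ((hint P hP).sub (θc.integrable _)).abs
  calc ∫ ω, |deriv φ (ξ ω) * η ω - θc ω| ∂(P : Measure Ω)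
      ≤ ∫ ω, (M * |η ω - θ₂ ω| + (K : ℝ) * B * |ξ ω - θ₁ ω|) ∂(P : Measure Ω) := by
        exact integral_mono hintL ((hint2.const_mul M).add (hint1.const_mul ((K : ℝ) * B)))
          fun ω => hbound ω
    _ = M * ∫ ω, |η ω - θ₂ ω| ∂(P : Measure Ω)
        + (K : ℝ) * B * ∫ ω, |ξ ω - θ₁ ω| ∂(P : Measure Ω) := by
        rw [integral_add (hint2.const_mul M) (hint1.const_mul ((K : ℝ) * B)),
          integral_const_mul, integral_const_mul]
    _ ≤ M * (δ / (2 * (M + 1))) + (K : ℝ) * B * (δ / (2 * ((K : ℝ) + 1) * (B + 1))) := by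
        have e1 : (0:ℝ) ≤ ∫ ω, |ξ ω - θ₁ ω| ∂(P : Measure Ω) :=
          integral_nonneg fun ω => abs_nonneg _
        have e2 : (0:ℝ) ≤ ∫ ω, |η ω - θ₂ ω| ∂(P : Measure Ω) :=
          integral_nonneg fun ω => abs_nonneg _
        have h1 := hθ₁ P hP; have h2 := hθ₂ P hP
        have hKB : (0:ℝ) ≤ (K : ℝ) * B := mul_nonneg K.2 hB0
        nlinarith
    _ ≤ δ := by
        have hK0 : (0:ℝ) ≤ (K : ℝ) := K.2
        rw [div_eq_mul_inv, div_eq_mul_inv]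
        have hq1 : M * (δ * (2 * (M + 1))⁻¹) ≤ δ / 2 := by
          rw [div_eq_mul_inv, mul_comm M, mul_assoc]
          have : M * (2 * (M+1))⁻¹ ≤ (2:ℝ)⁻¹ := by
            rw [mul_inv_le_iff₀ (by positivity)]
            nlinarith
          nlinarith [hδ.le]
        have hq2 : (K : ℝ) * B * (δ * (2 * ((K : ℝ) + 1) * (B + 1))⁻¹) ≤ δ / 2 := by
          rw [div_eq_mul_inv, mul_comm ((K : ℝ) * B), mul_assoc]
          have : (K : ℝ) * B * (2 * ((K : ℝ)+1) * (B+1))⁻¹ ≤ (2:ℝ)⁻¹ := by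
            rw [mul_inv_le_iff₀ (by positivity)]
            nlinarith
          nlinarith [hδ.le, mul_nonneg hK0 hB0]
        linarith

lemma rightDeriv {Ω : Type*} [MeasurableSpace Ω] [TopologicalSpace Ω] [PolishSpace Ω]
    [BorelSpace Ω]
    (𝒮 : Set (ProbabilityMeasure Ω)) (h𝒮ne : 𝒮.Nonempty) (h𝒮c : IsCompact 𝒮)
    (φ : ℝ → ℝ) (hφdiff : Differentiable ℝ φ)
    (M : ℝ) (hφ'bd : ∀ x, |deriv φ x| ≤ M)
    (K : NNReal) (hφ'lip : LipschitzWith K (deriv φ))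
    (ξ η : Ω → ℝ) (hξ : MemL1 𝒮 ξ) (hη : MemL1 𝒮 η)
    (hη2int : ∀ P ∈ 𝒮, Integrable (fun ω => (η ω) ^ 2) (P : Measure Ω))
    (Mη : ℝ) (hη2bd : ∀ P ∈ 𝒮, ∫ ω, (η ω) ^ 2 ∂(P : Measure Ω) ≤ Mη) :
    Tendsto
      (fun lam : ℝ =>
        (sublinE 𝒮 (fun ω => φ (ξ ω + lam * η ω)) - sublinE 𝒮 (fun ω => φ (ξ ω))) / lam)
      (𝓝[>] 0)
      (𝓝 (sublinECond 𝒮 (fun ω => φ (ξ ω)) (fun ω => deriv φ (ξ ω) * η ω))) := by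
  haveI : CompactSpace ↥𝒮 := isCompact_iff_compactSpace.mp h𝒮c
  haveI : Nonempty ↥𝒮 := h𝒮ne.to_subtype
  have hmemφ : ∀ lam : ℝ, MemL1 𝒮 (fun ω => φ (ξ ω + lam * η ω)) :=
    fun lam => memL1_comp hφdiff hφ'bd hξ hη lam
  have hmemφ0 : MemL1 𝒮 (fun ω => φ (ξ ω)) := by simpa using hmemφ 0
  have hmemd : MemL1 𝒮 (fun ω => deriv φ (ξ ω) * η ω) := memL1_deriv_mul hφ'bd hφ'lip hξ hη
  have hu : Continuous (fun P : 𝒮 =>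
      ∫ ω, φ (ξ ω) ∂((P : ProbabilityMeasure Ω) : Measure Ω)) := cont_integral 𝒮 hmemφ0
  have hv : Continuous (fun P : 𝒮 =>
      ∫ ω, deriv φ (ξ ω) * η ω ∂((P : ProbabilityMeasure Ω) : Measure Ω)) :=
    cont_integral 𝒮 hmemd
  have hf : ∀ (lam : ℝ) (x : ↥𝒮),
      |(∫ ω, φ (ξ ω + lam * η ω) ∂((x : ProbabilityMeasure Ω) : Measure Ω)) -
        ((∫ ω, φ (ξ ω) ∂((x : ProbabilityMeasure Ω) : Measure Ω)) +
          lam * ∫ ω, deriv φ (ξ ω) * η ω ∂((x : ProbabilityMeasure Ω) : Measure Ω))|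
      ≤ ((K : ℝ) * Mη) * lam ^ 2 := by
    rintro lam ⟨P, hP⟩
    have hintA : Integrable (fun ω => φ (ξ ω + lam * η ω)) (P : Measure Ω) :=
      (hmemφ lam).2.1 P hP
    have hintB : Integrable (fun ω => φ (ξ ω)) (P : Measure Ω) := hmemφ0.2.1 P hP
    have hintC : Integrable (fun ω => deriv φ (ξ ω) * η ω) (P : Measure Ω) := hmemd.2.1 P hP
    have heq : (∫ ω, φ (ξ ω + lam * η ω) ∂(P : Measure Ω)) -
        ((∫ ω, φ (ξ ω) ∂(P : Measure Ω)) +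
          lam * ∫ ω, deriv φ (ξ ω) * η ω ∂(P : Measure Ω))
        = ∫ ω, (φ (ξ ω + lam * η ω) - φ (ξ ω) - lam * (deriv φ (ξ ω) * η ω))
            ∂(P : Measure Ω) := by
      have h1 : ∫ ω, (φ (ξ ω + lam * η ω) - φ (ξ ω) - lam * (deriv φ (ξ ω) * η ω))
            ∂(P : Measure Ω)
          = (∫ ω, (φ (ξ ω + lam * η ω) - φ (ξ ω)) ∂(P : Measure Ω)) -
            ∫ ω, lam * (deriv φ (ξ ω) * η ω) ∂(P : Measure Ω) :=
        integral_sub (hintA.sub hintB) (hintC.const_mul lam)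
      have h2 : ∫ ω, (φ (ξ ω + lam * η ω) - φ (ξ ω)) ∂(P : Measure Ω)
          = (∫ ω, φ (ξ ω + lam * η ω) ∂(P : Measure Ω)) - ∫ ω, φ (ξ ω) ∂(P : Measure Ω) :=
        integral_sub hintA hintB
      have h3 : ∫ ω, lam * (deriv φ (ξ ω) * η ω) ∂(P : Measure Ω)
          = lam * ∫ ω, deriv φ (ξ ω) * η ω ∂(P : Measure Ω) := integral_const_mul _ _
      rw [h1, h2, h3]
      ring
    have hptwise : ∀ ω, |φ (ξ ω + lam * η ω) - φ (ξ ω) - lam * (deriv φ (ξ ω) * η ω)|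
        ≤ (K : ℝ) * lam ^ 2 * (η ω) ^ 2 := by
      intro ω
      have ht := taylor_aux hφdiff hφ'lip (ξ ω) (lam * η ω)
      have e1 : φ (ξ ω + lam * η ω) - φ (ξ ω) - lam * (deriv φ (ξ ω) * η ω)
          = φ (ξ ω + lam * η ω) - φ (ξ ω) - (lam * η ω) * deriv φ (ξ ω) := by ring
      have e2 : (K : ℝ) * (lam * η ω) ^ 2 = (K : ℝ) * lam ^ 2 * (η ω) ^ 2 := by ring
      rw [e1]
      rw [e2] at ht
      exact ht
    have hintD : Integrable
        (fun ω => φ (ξ ω + lam * η ω) - φ (ξ ω) - lam * (deriv φ (ξ ω) * η ω))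
        (P : Measure Ω) := (hintA.sub hintB).sub (hintC.const_mul lam)
    calc |(∫ ω, φ (ξ ω + lam * η ω) ∂(P : Measure Ω)) -
          ((∫ ω, φ (ξ ω) ∂(P : Measure Ω)) +
            lam * ∫ ω, deriv φ (ξ ω) * η ω ∂(P : Measure Ω))|
        = |∫ ω, (φ (ξ ω + lam * η ω) - φ (ξ ω) - lam * (deriv φ (ξ ω) * η ω))
            ∂(P : Measure Ω)| := by rw [heq]
      _ ≤ ∫ ω, |φ (ξ ω + lam * η ω) - φ (ξ ω) - lam * (deriv φ (ξ ω) * η ω)|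
            ∂(P : Measure Ω) := by
          simpa [Real.norm_eq_abs] using norm_integral_le_integral_norm (μ := (P : Measure Ω))
            (fun ω => φ (ξ ω + lam * η ω) - φ (ξ ω) - lam * (deriv φ (ξ ω) * η ω))
      _ ≤ ∫ ω, (K : ℝ) * lam ^ 2 * (η ω) ^ 2 ∂(P : Measure Ω) := by
          exact integral_mono hintD.abs ((hη2int P hP).const_mul _) fun ω => hptwise ω
      _ = (K : ℝ) * lam ^ 2 * ∫ ω, (η ω) ^ 2 ∂(P : Measure Ω) := integral_const_mul _ _
      _ ≤ (K : ℝ) * lam ^ 2 * Mη := by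
          exact mul_le_mul_of_nonneg_left (hη2bd P hP) (by positivity)
      _ = ((K : ℝ) * Mη) * lam ^ 2 := by ring
  have key := danskin (X := ↥𝒮)
    (fun P : 𝒮 => ∫ ω, φ (ξ ω) ∂((P : ProbabilityMeasure Ω) : Measure Ω))
    (fun P : 𝒮 => ∫ ω, deriv φ (ξ ω) * η ω ∂((P : ProbabilityMeasure Ω) : Measure Ω))
    hu hv
    (fun lam (P : 𝒮) => ∫ ω, φ (ξ ω + lam * η ω) ∂((P : ProbabilityMeasure Ω) : Measure Ω))
    ((K : ℝ) * Mη) hf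
  have hlim : (⨆ x : {x : ↥𝒮 // (∫ ω, φ (ξ ω) ∂((x : ProbabilityMeasure Ω) : Measure Ω)) =
        ⨆ y : ↥𝒮, ∫ ω, φ (ξ ω) ∂((y : ProbabilityMeasure Ω) : Measure Ω)},
        ∫ ω, deriv φ (ξ ω) * η ω ∂(((x : ↥𝒮) : ProbabilityMeasure Ω) : Measure Ω))
      = sublinECond 𝒮 (fun ω => φ (ξ ω)) (fun ω => deriv φ (ξ ω) * η ω) := by
    rw [sublinECond, iSup, iSup]
    congr 1
    ext r
    simp only [Set.mem_range]
    constructor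
    · rintro ⟨⟨⟨P, hP⟩, hmax⟩, rfl⟩
      exact ⟨⟨P, hP, hmax⟩, rfl⟩
    · rintro ⟨⟨P, hP, hmax⟩, rfl⟩
      exact ⟨⟨⟨P, hP⟩, hmax⟩, rfl⟩
  rw [← hlim]
  exact key

/-- for `φ ∈ C¹(ℝ)` with bounded Lipschitz derivative and `ξ, η ∈ L¹(𝒮)` with
`sup_{P∈𝒮} ∫ η² dP < ∞`, one has `φ(ξ+λη) ∈ L¹(𝒮)` and `φ'(ξ)η ∈ L¹(𝒮)`, and for
`H(λ) = Ê[φ(ξ+λη)]`: `H'₊(0) = Ê_{φ(ξ)}[φ'(ξ)η]` and `H'₋(0) = −Ê_{φ(ξ)}[−φ'(ξ)η]`. -/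
theorem stmt_10 {Ω : Type*} [MeasurableSpace Ω] [TopologicalSpace Ω] [PolishSpace Ω] [BorelSpace Ω]
    (𝒮 : Set (ProbabilityMeasure Ω)) (h𝒮ne : 𝒮.Nonempty) (h𝒮c : IsCompact 𝒮)
    (φ : ℝ → ℝ) (hφdiff : Differentiable ℝ φ)
    (M : ℝ) (hφ'bd : ∀ x, |deriv φ x| ≤ M)
    (K : NNReal) (hφ'lip : LipschitzWith K (deriv φ))
    (ξ η : Ω → ℝ) (hξ : MemL1 𝒮 ξ) (hη : MemL1 𝒮 η)
    (hη2int : ∀ P ∈ 𝒮, Integrable (fun ω => (η ω) ^ 2) (P : Measure Ω))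
    (Mη : ℝ) (hη2bd : ∀ P ∈ 𝒮, ∫ ω, (η ω) ^ 2 ∂(P : Measure Ω) ≤ Mη) :
    (∀ lam : ℝ, MemL1 𝒮 (fun ω => φ (ξ ω + lam * η ω))) ∧
    MemL1 𝒮 (fun ω => deriv φ (ξ ω) * η ω) ∧
    Tendsto
      (fun lam : ℝ =>
        (sublinE 𝒮 (fun ω => φ (ξ ω + lam * η ω)) - sublinE 𝒮 (fun ω => φ (ξ ω))) / lam)
      (𝓝[>] 0)
      (𝓝 (sublinECond 𝒮 (fun ω => φ (ξ ω)) (fun ω => deriv φ (ξ ω) * η ω))) ∧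
    Tendsto
      (fun lam : ℝ =>
        (sublinE 𝒮 (fun ω => φ (ξ ω + lam * η ω)) - sublinE 𝒮 (fun ω => φ (ξ ω))) / lam)
      (𝓝[<] 0)
      (𝓝 (-(sublinECond 𝒮 (fun ω => φ (ξ ω)) (fun ω => -(deriv φ (ξ ω) * η ω))))) := by
  refine ⟨fun lam => memL1_comp hφdiff hφ'bd hξ hη lam, memL1_deriv_mul hφ'bd hφ'lip hξ hη,
    rightDeriv 𝒮 h𝒮ne h𝒮c φ hφdiff M hφ'bd K hφ'lip ξ η hξ hη hη2int Mη hη2bd, ?_⟩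
  -- left derivative via `η ↦ -η`
  have h4 := rightDeriv 𝒮 h𝒮ne h𝒮c φ hφdiff M hφ'bd K hφ'lip ξ (fun ω => -η ω) hξ
    (memL1_neg hη)
    (fun P hP => by simpa using hη2int P hP)
    Mη (fun P hP => by simpa using hη2bd P hP)
  have eL : (fun ω => deriv φ (ξ ω) * -η ω) = (fun ω => -(deriv φ (ξ ω) * η ω)) := by
    funext ω; ring
  rw [eL] at h4
  have hneg : Tendsto (fun lam : ℝ => -lam) (𝓝[<] (0:ℝ)) (𝓝[>] (0:ℝ)) := by
    have h1 : Tendsto (fun lam : ℝ => -lam) (𝓝 (0:ℝ)) (𝓝 (0:ℝ)) := by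
      simpa using (continuous_neg.tendsto (0:ℝ))
    rw [nhdsWithin, nhdsWithin]
    refine Tendsto.inf h1 (tendsto_principal_principal.2 fun x hx => ?_)
    exact mem_Ioi.mpr (neg_pos.2 (mem_Iio.mp hx))
  have h5 := (h4.comp hneg).neg
  have hfun : (fun lam : ℝ => -(((fun m : ℝ =>
      (sublinE 𝒮 (fun ω => φ (ξ ω + m * -η ω)) - sublinE 𝒮 (fun ω => φ (ξ ω))) / m) ∘
      (fun lam : ℝ => -lam)) lam))
      = fun lam : ℝ =>
        (sublinE 𝒮 (fun ω => φ (ξ ω + lam * η ω)) - sublinE 𝒮 (fun ω => φ (ξ ω))) / lam := by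
    funext lam
    simp only [Function.comp_apply]
    rw [show (fun ω => φ (ξ ω + -lam * -η ω)) = (fun ω => φ (ξ ω + lam * η ω)) from
      funext fun ω => by ring_nf, div_neg, neg_neg]
  rw [hfun] at h5
  exact h5
end
end
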